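/- arXiv:1410.1011 — 8 statements merged into one kernel-verified Lean document; each statement's English description precedes it below -/
import Mathlib

section
/- With [·,·] and basis {e₊,e₀,e₁,e₂} as in the frozen-mode Gram matrix (with [e₊,e₊]=1, [e₀,e₂]=[e₂,e₀]=[e₁,e₁]=-1, other pairings zero), suppose T is flux-unitary, T e₊ = a₊ e₊ + a₀ e₀ + a₁ e₁ and T e₀ = b₊ e₊ + b₀ e₀ + b₁ e₁ (i.e. T maps the span V̊₊ = span{e₊,e₀} into V̊ = span{e₊,e₀,e₁}). Then b₊ = b₁ = 0 and T e₀ = b₀ e₀ with b₀ ≠ 0. -/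
open scoped ComplexConjugate

/-!
The pairings of `T e₊` and `T e₀` only see their `e₊`- and `e₁`-coordinates, since `e₀` pairs
with `e₂` alone. So `(aP, a₁)` and `(bP, b₁)` are vectors of `ℂ^{1,1}` (form `|x|² - |y|²`): the
first of square `1`, the second null and orthogonal to it, which forces the second to vanish.
Then `T e₀ = b₀ e₀`, and `b₀ ≠ 0` because `T` is injective.
-/

theorem form_smul_add_smul_add_smul {V : Type*} [AddCommGroup V] [Module ℂ V]
    (B : V → V → ℂ)
    (hadd₁ : ∀ x y z, B (x + y) z = B x z + B y z)
    (hadd₂ : ∀ x y z, B x (y + z) = B x y + B x z)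
    (hsmul₁ : ∀ (c : ℂ) (x y), B (c • x) y = conj c * B x y)
    (hsmul₂ : ∀ (c : ℂ) (x y), B x (c • y) = c * B x y)
    (e : Fin 4 → V)
    (hG : ∀ i j, B (e i) (e j) =
      !![(1:ℂ),0,0,0; 0,0,0,-1; 0,0,-1,0; 0,-1,0,0] i j)
    (p q r s t u : ℂ) :
    B (p • e 0 + q • e 1 + r • e 2) (s • e 0 + t • e 1 + u • e 2) =
      conj p * s - conj r * u := by
  simp only [hadd₁, hadd₂, hsmul₁, hsmul₂, hG, Matrix.of_apply, Matrix.cons_val',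
    Matrix.cons_val_zero, Matrix.cons_val_one, Matrix.cons_val, Matrix.cons_val_fin_one]
  ring

theorem eq_zero_of_isotropic_of_orthogonal_of_unit {a b c d : ℂ}
    (hunit : conj a * a - conj c * c = 1) (horth : conj a * b - conj c * d = 0)
    (hnull : conj b * b - conj d * d = 0) : b = 0 ∧ d = 0 := by
  simp only [← Complex.normSq_eq_conj_mul_self] at hunit hnull
  have hunit' : Complex.normSq a - Complex.normSq c = 1 := by exact_mod_cast hunit
  have hnull' : Complex.normSq b = Complex.normSq d := by
    rw [← sub_eq_zero]; exact_mod_cast hnull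
  have hprod : Complex.normSq a * Complex.normSq b = Complex.normSq c * Complex.normSq d := by
    simpa only [map_mul, Complex.normSq_conj] using congrArg Complex.normSq (sub_eq_zero.mp horth)
  have hb : Complex.normSq b = 0 := by
    linear_combination (-Complex.normSq b) * hunit' + hprod - Complex.normSq c * hnull'
  exact ⟨Complex.normSq_eq_zero.mp hb, Complex.normSq_eq_zero.mp (hnull' ▸ hb)⟩

/-- Basis convention: `e 0 = e₊`, `e 1 = e₀`, `e 2 = e₁`, `e 3 = e₂`. -/
theorem stmt_3
    (B : (Fin 4 → ℂ) → (Fin 4 → ℂ) → ℂ)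
    (hadd₁ : ∀ x y z, B (x + y) z = B x z + B y z)
    (hadd₂ : ∀ x y z, B x (y + z) = B x y + B x z)
    (hsmul₁ : ∀ (c : ℂ) (x y), B (c • x) y = conj c * B x y)
    (hsmul₂ : ∀ (c : ℂ) (x y), B x (c • y) = c * B x y)
    (e : Module.Basis (Fin 4) ℂ (Fin 4 → ℂ))
    (hG : ∀ i j, B (e i) (e j) =
      !![(1:ℂ),0,0,0; 0,0,0,-1; 0,0,-1,0; 0,-1,0,0] i j)
    (T : (Fin 4 → ℂ) ≃ₗ[ℂ] (Fin 4 → ℂ))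
    (hT : ∀ x y, B (T x) (T y) = B x y)
    (aP a₀ a₁ bP b₀ b₁ : ℂ)
    (hTeP : T (e 0) = aP • e 0 + a₀ • e 1 + a₁ • e 2)
    (hTe₀ : T (e 1) = bP • e 0 + b₀ • e 1 + b₁ • e 2) :
    bP = 0 ∧ b₁ = 0 ∧ b₀ ≠ 0 := by
  have hB := form_smul_add_smul_add_smul B hadd₁ hadd₂ hsmul₁ hsmul₂ e hG
  have hunit : conj aP * aP - conj a₁ * a₁ = 1 := by
    simpa [hTeP, hB, hG] using hT (e 0) (e 0)
  have horth : conj aP * bP - conj a₁ * b₁ = 0 := by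
    simpa [hTeP, hTe₀, hB, hG] using hT (e 0) (e 1)
  have hnull : conj bP * bP - conj b₁ * b₁ = 0 := by
    simpa [hTe₀, hB, hG] using hT (e 1) (e 1)
  obtain ⟨hbP, hb₁⟩ := eq_zero_of_isotropic_of_orthogonal_of_unit hunit horth hnull
  refine ⟨hbP, hb₁, fun hb₀ => e.ne_zero 1 ?_⟩
  rw [← T.map_eq_zero_iff, hTe₀, hbP, hb₁, hb₀]
  simp
end

section
/- Let [·,·] on ℂ⁴ have the frozen-mode Gram matrix in the basis {e₊,e₀,e₁,e₂} ([e₊,e₊]=1, [e₀,e₂]=[e₂,e₀]=[e₁,e₁]=-1, other pairings zero), and let T be flux-unitary with T e₀ = ℓ e₀, ℓ ≠ 0. Then, writing T in this basis, the (2,1), (3,1), (3,0), (3,2) entries vanish (columns/rows indexed by +,0,1,2), the (3,3) entry equals 1/conj(ℓ), and the entries satisfy |a₊₊|² − |a₁₊|² = 1, |a₁₁|² − |a₊₁|² = 1, and conj(a₊₊)·a₊₁ = conj(a₁₊)·a₁₁; in particular a₊₊ ≠ 0 and a₁₁ ≠ 0. -/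
open scoped ComplexConjugate

/-!
Expanding the form in the basis turns `[T x, T y] = [x, y]` into the matrix identity `Aᴴ G A = G`,
`G` the Gram matrix. As the `e₀`-column of `A` is `ℓ e₀`, the `e₀`-row of this identity reads
`-conj ℓ · a₂ₖ = G₀ₖ = -δ₂ₖ`: this pins down the `e₂`-row of `A` (and forces `ℓ ≠ 0`). Once
`a₂₊ = a₂₁ = 0`, the `(+,+)`, `(1,1)` and `(+,1)` entries of the identity involve only the
`{e₊, e₁}` block of `A` and say that this block is pseudo-unitary for `diag(1, -1)`.
-/

open Matrix

theorem LinearMap.conjTranspose_toMatrix_mul_toMatrix₂_mul_toMatrix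
    {R M ι : Type*} [CommSemiring R] [StarRing R] [AddCommMonoid M] [Module R M]
    [Fintype ι] [DecidableEq ι] (b : Module.Basis ι R M) (B : M →ₗ⋆[R] M →ₗ[R] R)
    (T : M →ₗ[R] M) (hT : ∀ x y, B (T x) (T y) = B x y) :
    (toMatrix b b T)ᴴ * toMatrix₂ b b B * toMatrix b b T = toMatrix₂ b b B := by
  ext j k
  rw [toMatrix₂_apply, ← hT, apply_eq_dotProduct_toMatrix₂_mulVec b b, Matrix.mul_assoc,
    Matrix.mul_apply]
  simp [dotProduct, mulVec, Matrix.mul_apply, toMatrix_apply, Finset.mul_sum, starRingEnd_apply]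

theorem Complex.norm_sq_sub_norm_sq_eq_one_of_conj_mul {a b : ℂ}
    (h : conj a * a - conj b * b = 1) : ‖a‖ ^ 2 - ‖b‖ ^ 2 = 1 := by
  have : ((‖a‖ ^ 2 - ‖b‖ ^ 2 : ℝ) : ℂ) = 1 := by
    push_cast
    rw [← Complex.conj_mul', ← Complex.conj_mul', h]
  exact_mod_cast this

theorem ne_zero_of_norm_sq_sub_norm_sq_eq_one {E : Type*} [SeminormedAddGroup E] {a b : E}
    (h : ‖a‖ ^ 2 - ‖b‖ ^ 2 = 1) : a ≠ 0 := by
  rintro rfl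
  rw [norm_zero] at h
  nlinarith [sq_nonneg ‖b‖]

def frozenGram : Matrix (Fin 4) (Fin 4) ℂ := !![1, 0, 0, 0; 0, 0, 0, -1; 0, 0, -1, 0; 0, -1, 0, 0]

theorem conjTranspose_mul_frozenGram_mul_apply (M : Matrix (Fin 4) (Fin 4) ℂ) (j k : Fin 4) :
    (Mᴴ * frozenGram * M) j k = conj (M 0 j) * M 0 k - conj (M 1 j) * M 3 k
      - conj (M 2 j) * M 2 k - conj (M 3 j) * M 1 k := by
  simp [Matrix.mul_apply, Fin.sum_univ_four, frozenGram]
  ring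

section FrozenGram

variable {M : Matrix (Fin 4) (Fin 4) ℂ} {ℓ : ℂ}

theorem conj_mul_row_three_of_frozenGram (hM : Mᴴ * frozenGram * M = frozenGram)
    (hcol : ∀ i, M i 1 = (Pi.single 1 ℓ : Fin 4 → ℂ) i) (k : Fin 4) :
    conj ℓ * M 3 k = (Pi.single 3 1 : Fin 4 → ℂ) k := by
  have hG : frozenGram 1 k = -(Pi.single 3 1 : Fin 4 → ℂ) k := by
    fin_cases k <;> simp [frozenGram]
  have h := congrFun₂ hM 1 k
  rw [conjTranspose_mul_frozenGram_mul_apply, hcol 0, hcol 1, hcol 2, hcol 3, hG] at h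
  simp only [ne_eq, Fin.reduceEq, not_false_eq_true, Pi.single_eq_of_ne, Pi.single_eq_same,
    map_zero, zero_mul] at h
  linear_combination -h

theorem row_three_eq_of_frozenGram (hM : Mᴴ * frozenGram * M = frozenGram)
    (hcol : ∀ i, M i 1 = (Pi.single 1 ℓ : Fin 4 → ℂ) i) :
    M 3 0 = 0 ∧ M 3 2 = 0 ∧ M 3 3 = (conj ℓ)⁻¹ := by
  have h := conj_mul_row_three_of_frozenGram hM hcol
  have h33 : conj ℓ * M 3 3 = 1 := h 3
  have hℓ : conj ℓ ≠ 0 := left_ne_zero_of_mul_eq_one h33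
  refine ⟨?_, ?_, (inv_eq_of_mul_eq_one_right h33).symm⟩
  · simpa [hℓ] using h 0
  · simpa [hℓ] using h 2

theorem plus_one_block_of_frozenGram (hM : Mᴴ * frozenGram * M = frozenGram)
    (h30 : M 3 0 = 0) (h32 : M 3 2 = 0) :
    conj (M 0 0) * M 0 0 - conj (M 2 0) * M 2 0 = 1 ∧
    conj (M 2 2) * M 2 2 - conj (M 0 2) * M 0 2 = 1 ∧
    conj (M 0 0) * M 0 2 = conj (M 2 0) * M 2 2 := by
  have block {j k : Fin 4} (hj : M 3 j = 0) (hk : M 3 k = 0) :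
      conj (M 0 j) * M 0 k - conj (M 2 j) * M 2 k = frozenGram j k := by
    have h := congrFun₂ hM j k
    rw [conjTranspose_mul_frozenGram_mul_apply, hj, hk, map_zero] at h
    linear_combination h
  have h22 : conj (M 0 2) * M 0 2 - conj (M 2 2) * M 2 2 = -1 := block h32 h32
  have h02 : conj (M 0 0) * M 0 2 - conj (M 2 0) * M 2 2 = 0 := block h30 h32
  exact ⟨block h30 h30, by linear_combination -h22, by linear_combination h02⟩

end FrozenGram

theorem stmt_4_general
    (B : (Fin 4 → ℂ) → (Fin 4 → ℂ) → ℂ)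
    (hadd₁ : ∀ x y z, B (x + y) z = B x z + B y z)
    (hadd₂ : ∀ x y z, B x (y + z) = B x y + B x z)
    (hsmul₁ : ∀ (c : ℂ) (x y), B (c • x) y = conj c * B x y)
    (hsmul₂ : ∀ (c : ℂ) (x y), B x (c • y) = c * B x y)
    (e : Module.Basis (Fin 4) ℂ (Fin 4 → ℂ))
    (hG : ∀ i j, B (e i) (e j) =
      !![(1:ℂ),0,0,0; 0,0,0,-1; 0,0,-1,0; 0,-1,0,0] i j)
    (T : (Fin 4 → ℂ) ≃ₗ[ℂ] (Fin 4 → ℂ))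
    (hT : ∀ x y, B (T x) (T y) = B x y)
    (ℓ : ℂ) (hℓ : T (e 1) = ℓ • e 1)
    (A : Fin 4 → Fin 4 → ℂ) (hA : ∀ i j, A i j = e.repr (T (e j)) i) :
    A 2 1 = 0 ∧ A 3 1 = 0 ∧ A 3 0 = 0 ∧ A 3 2 = 0 ∧
    A 3 3 = (conj ℓ)⁻¹ ∧
    ‖A 0 0‖ ^ 2 - ‖A 2 0‖ ^ 2 = 1 ∧
    ‖A 2 2‖ ^ 2 - ‖A 0 2‖ ^ 2 = 1 ∧
    conj (A 0 0) * A 0 2 = conj (A 2 0) * A 2 2 ∧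
    A 0 0 ≠ 0 ∧ A 2 2 ≠ 0 := by
  let Bₛ := LinearMap.mk₂'ₛₗ (starRingEnd ℂ) (RingHom.id ℂ) B hadd₁ hsmul₁ hadd₂ hsmul₂
  have hGram : LinearMap.toMatrix₂ e e Bₛ = frozenGram := by
    ext i j
    rw [LinearMap.toMatrix₂_apply]
    exact hG i j
  have hMat : LinearMap.toMatrix e e T = Matrix.of A := by
    ext i j
    simp [LinearMap.toMatrix_apply, hA]
  have hM : (Matrix.of A)ᴴ * frozenGram * Matrix.of A = frozenGram := by
    simpa only [hGram, hMat] using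
      LinearMap.conjTranspose_toMatrix_mul_toMatrix₂_mul_toMatrix e Bₛ T.toLinearMap hT
  have hcol : ∀ i, A i 1 = (Pi.single 1 ℓ : Fin 4 → ℂ) i := by
    intro i
    simp [hA, hℓ, Finsupp.single_apply, Pi.single_apply, eq_comm]
  obtain ⟨h30, h32, h33⟩ := row_three_eq_of_frozenGram hM hcol
  obtain ⟨h00, h22, h02⟩ := plus_one_block_of_frozenGram hM h30 h32
  have n00 := Complex.norm_sq_sub_norm_sq_eq_one_of_conj_mul h00
  have n22 := Complex.norm_sq_sub_norm_sq_eq_one_of_conj_mul h22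
  exact ⟨hcol 2, hcol 3, h30, h32, h33, n00, n22, h02,
    ne_zero_of_norm_sq_sub_norm_sq_eq_one n00, ne_zero_of_norm_sq_sub_norm_sq_eq_one n22⟩

/-- Structure of a flux-unitary matrix in the resonant case `T e₀ = ℓ e₀`.
Basis convention: `e 0 = e₊`, `e 1 = e₀`, `e 2 = e₁`, `e 3 = e₂`; the matrix
entry `A i j` is the `e i`-component of `T (e j)`. -/
theorem stmt_4
    (B : (Fin 4 → ℂ) → (Fin 4 → ℂ) → ℂ)
    (hadd₁ : ∀ x y z, B (x + y) z = B x z + B y z)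
    (hadd₂ : ∀ x y z, B x (y + z) = B x y + B x z)
    (hsmul₁ : ∀ (c : ℂ) (x y), B (c • x) y = conj c * B x y)
    (hsmul₂ : ∀ (c : ℂ) (x y), B x (c • y) = c * B x y)
    (e : Module.Basis (Fin 4) ℂ (Fin 4 → ℂ))
    (hG : ∀ i j, B (e i) (e j) =
      !![(1:ℂ),0,0,0; 0,0,0,-1; 0,0,-1,0; 0,-1,0,0] i j)
    (T : (Fin 4 → ℂ) ≃ₗ[ℂ] (Fin 4 → ℂ))
    (hT : ∀ x y, B (T x) (T y) = B x y)
    (ℓ : ℂ) (hℓ0 : ℓ ≠ 0) (hℓ : T (e 1) = ℓ • e 1)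
    (A : Fin 4 → Fin 4 → ℂ) (hA : ∀ i j, A i j = e.repr (T (e j)) i) :
    A 2 1 = 0 ∧ A 3 1 = 0 ∧ A 3 0 = 0 ∧ A 3 2 = 0 ∧
    A 3 3 = (conj ℓ)⁻¹ ∧
    ‖A 0 0‖ ^ 2 - ‖A 2 0‖ ^ 2 = 1 ∧
    ‖A 2 2‖ ^ 2 - ‖A 0 2‖ ^ 2 = 1 ∧
    conj (A 0 0) * A 0 2 = conj (A 2 0) * A 2 2 ∧
    A 0 0 ≠ 0 ∧ A 2 2 ≠ 0 :=
  stmt_4_general B hadd₁ hadd₂ hsmul₁ hsmul₂ e hG T hT ℓ hℓ A hA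
end

section
/- Let [·,·] have the frozen-mode Gram matrix and let T be flux-unitary with T[V̊] = V̊ where V̊ = span{e₊,e₀,e₁}. Then T e₀ is a scalar multiple of e₀. -/
open scoped ComplexConjugate

/-! `e 1` lies in the radical of the form on `V̊ = span {e 0, e 1, e 2}`, so `e 1` is orthogonal to
all of `V̊`. Since `T` preserves the form and maps `V̊` onto itself, `T (e 1)` is orthogonal to `V̊`
as well. Reading the Gram matrix, a vector orthogonal to `e 0`, `e 1`, `e 2` has vanishing
coordinates along `e 0`, `e 3`, `e 2`, hence lies on the line through `e 1`. -/

open Module Submodule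

abbrev frozenModeGram : Matrix (Fin 4) (Fin 4) ℂ :=
  !![1, 0, 0, 0; 0, 0, 0, -1; 0, 0, -1, 0; 0, -1, 0, 0]

theorem LinearMap.sum_repr_smul_apply {R S M N P ι : Type*} [CommSemiring R] [CommSemiring S]
    [AddCommMonoid M] [AddCommMonoid N] [AddCommMonoid P] [Module R M] [Module S N] [Module S P]
    [Fintype ι] {ρ : R →+* S} (F : M →ₛₗ[ρ] N →ₗ[S] P) (b : Basis ι R M) (x : M) (y : N) :
    ∑ i, ρ (b.repr x i) • F (b i) y = F x y := by
  conv_rhs => rw [← b.sum_repr x]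
  simp only [map_sum, map_smulₛₗ, LinearMap.sum_apply, LinearMap.smul_apply]

theorem forall_mem_apply_eq_zero_of_map_eq {R M P : Type*} [Semiring R] [AddCommMonoid M]
    [Module R M] [Zero P] {B : M → M → P} (T : M ≃ₗ[R] M) (hT : ∀ x y, B (T x) (T y) = B x y)
    {V : Submodule R M} (hV : V.map T.toLinearMap = V) {x : M} (hx : ∀ v ∈ V, B x v = 0) :
    ∀ v ∈ V, B (T x) v = 0 := by
  intro v hv
  rw [← hV] at hv
  obtain ⟨u, hu, rfl⟩ := hv
  exact (hT x u).trans (hx u hu)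

section FrozenModeGram

variable {M : Type*} [AddCommGroup M] [Module ℂ M] {F : M →ₗ⋆[ℂ] M →ₗ[ℂ] ℂ} {e : Basis (Fin 4) ℂ M}

theorem apply_basis_one_eq_zero_of_mem_span (hG : ∀ i j, F (e i) (e j) = frozenModeGram i j)
    {v : M} (hv : v ∈ span ℂ {e 0, e 1, e 2}) : F (e 1) v = 0 := by
  refine LinearMap.eqOn_span' (g := 0) ?_ hv
  rintro _ (rfl | rfl | rfl) <;> simp [hG]

theorem eq_repr_smul_basis_one_of_apply_eq_zero
    (hG : ∀ i j, F (e i) (e j) = frozenModeGram i j) {x : M}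
    (h₀ : F x (e 0) = 0) (h₁ : F x (e 1) = 0) (h₂ : F x (e 2) = 0) :
    x = e.repr x 1 • e 1 := by
  rw [← F.sum_repr_smul_apply e] at h₀ h₁ h₂
  simp [Fin.sum_univ_four, hG] at h₀ h₁ h₂
  conv_lhs => rw [← e.sum_repr x]
  rw [Fin.sum_univ_four, h₀, h₁, h₂]
  simp

end FrozenModeGram

/-- Basis convention: `e 0 = e₊`, `e 1 = e₀`, `e 2 = e₁`, `e 3 = e₂`. -/
theorem stmt_7
    (B : (Fin 4 → ℂ) → (Fin 4 → ℂ) → ℂ)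
    (hadd₁ : ∀ x y z, B (x + y) z = B x z + B y z)
    (hadd₂ : ∀ x y z, B x (y + z) = B x y + B x z)
    (hsmul₁ : ∀ (c : ℂ) (x y), B (c • x) y = conj c * B x y)
    (hsmul₂ : ∀ (c : ℂ) (x y), B x (c • y) = c * B x y)
    (e : Module.Basis (Fin 4) ℂ (Fin 4 → ℂ))
    (hG : ∀ i j, B (e i) (e j) =
      !![(1:ℂ),0,0,0; 0,0,0,-1; 0,0,-1,0; 0,-1,0,0] i j)
    (T : (Fin 4 → ℂ) ≃ₗ[ℂ] (Fin 4 → ℂ))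
    (hT : ∀ x y, B (T x) (T y) = B x y)
    (hinv : (Submodule.span ℂ ({e 0, e 1, e 2} : Set (Fin 4 → ℂ))).map T.toLinearMap
      = Submodule.span ℂ ({e 0, e 1, e 2} : Set (Fin 4 → ℂ))) :
    ∃ ℓ : ℂ, T (e 1) = ℓ • e 1 := by
  let F : (Fin 4 → ℂ) →ₗ⋆[ℂ] (Fin 4 → ℂ) →ₗ[ℂ] ℂ :=
    LinearMap.mk₂'ₛₗ _ _ B hadd₁ hsmul₁ hadd₂ hsmul₂
  have hGF : ∀ i j, F (e i) (e j) = frozenModeGram i j := hG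
  have hTe : ∀ v ∈ span ℂ {e 0, e 1, e 2}, B (T (e 1)) v = 0 :=
    forall_mem_apply_eq_zero_of_map_eq T hT hinv
      fun v hv ↦ apply_basis_one_eq_zero_of_mem_span hGF hv
  exact ⟨_, eq_repr_smul_basis_one_of_apply_eq_zero hGF
    (hTe _ (subset_span (by simp))) (hTe _ (subset_span (by simp))) (hTe _ (subset_span (by simp)))⟩
end

section
/- Let [·,·] have the frozen-mode Gram matrix and let T be flux-unitary. If D̊ := [T e₊,e₊][T e₀,e₀] − [T e₊,e₀][T e₀,e₊] ≠ 0, then the intersection of T⁻¹[span{e₊,e₀}] with span{e₊,e₀,e₁} is one-dimensional, and any nonzero vector v = a e₊ + b e₀ + c e₁ in this intersection has a ≠ 0. -/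
open scoped ComplexConjugate
open Module Submodule

/-!
Write `U = T⁻¹[span{e₊,e₀}]`, `V = span{e₊,e₀,e₁}` and `W = span{e₀,e₁}`. The form is
positive semidefinite on `span{e₊,e₀}` (`[αe₊ + βe₀, αe₊ + βe₀] = |α|²`) and negative
semidefinite on `W` (`[be₀ + ce₁, be₀ + ce₁] = -|c|²`). So if `v ∈ U ∩ W`, invariance of the
form gives `|α|² = -|c|²`, whence `v = be₀` and `T v ∈ ℂ e₀`; for `b ≠ 0` this makes `e₀` an
eigenvector of `T`, which forces `D̊ = 0`. Hence `U ∩ W = 0`, which is the claim `a ≠ 0`, and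
Grassmann's formula gives `dim (U ∩ V) ≥ 2 + 3 - 4` and `dim (U ∩ V) + dim W ≤ dim V`.
-/

theorem RCLike.eq_zero_and_eq_zero_of_conj_mul_add_conj_mul {K : Type*} [RCLike K] {a b : K}
    (h : conj a * a + conj b * b = 0) : a = 0 ∧ b = 0 := by
  have h' : ((‖a‖ ^ 2 + ‖b‖ ^ 2 : ℝ) : K) = 0 := by
    simpa only [RCLike.conj_mul, RCLike.ofReal_add, RCLike.ofReal_pow] using h
  rw [RCLike.ofReal_eq_zero, add_eq_zero_iff_of_nonneg (by positivity) (by positivity)] at h'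
  simpa using h'

namespace Submodule

variable {K V : Type*} [DivisionRing K] [AddCommGroup V] [Module K V] [FiniteDimensional K V]

theorem finrank_add_finrank_le_finrank_add_finrank_inf (s t : Submodule K V) :
    finrank K s + finrank K t ≤ finrank K V + finrank K ↥(s ⊓ t) := by
  rw [← finrank_sup_add_finrank_inf_eq]
  exact Nat.add_le_add_right (s ⊔ t).finrank_le _

theorem finrank_add_finrank_le_of_disjoint_of_le {s t u : Submodule K V} (hst : Disjoint s t)
    (hsu : s ≤ u) (htu : t ≤ u) : finrank K s + finrank K t ≤ finrank K u := by
  rw [← finrank_sup_add_finrank_inf_eq, hst.eq_bot, finrank_bot, add_zero]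
  exact finrank_mono (sup_le hsu htu)

end Submodule

namespace Module.Basis

variable {K V ι : Type*} [DivisionRing K] [AddCommGroup V] [Module K V] (e : Basis ι K V)

theorem finrank_span_image_finset (s : Finset ι) : finrank K (span K (e '' s)) = s.card := by
  rw [Set.image_eq_range]
  exact (finrank_span_eq_card (e.linearIndependent.comp _ Subtype.val_injective)).trans
    (Fintype.card_coe s)

theorem finrank_span_pair {i j : ι} (hij : i ≠ j) : finrank K (span K {e i, e j}) = 2 := by
  classical
  have := e.finrank_span_image_finset {i, j}
  rwa [Finset.coe_insert, Finset.coe_singleton, Set.image_insert_eq, Set.image_singleton,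
    Finset.card_pair hij] at this

theorem finrank_span_triple {i j k : ι} (hij : i ≠ j) (hik : i ≠ k) (hjk : j ≠ k) :
    finrank K (span K {e i, e j, e k}) = 3 := by
  classical
  have := e.finrank_span_image_finset {i, j, k}
  rwa [Finset.coe_insert, Finset.coe_pair, Set.image_insert_eq, Set.image_pair,
    Finset.card_eq_three.mpr ⟨i, j, k, hij, hik, hjk, rfl⟩] at this

end Module.Basis

namespace LinearMap

variable {E : Type*} [AddCommGroup E] [Module ℂ E] (B : E →ₗ⋆[ℂ] E →ₗ[ℂ] ℂ)

theorem apply_smul_add_smul_self_of_isotropic {u w : E} (hw : B w w = 0) (huw : B u w = 0)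
    (hwu : B w u = 0) (α β : ℂ) :
    B (α • u + β • w) (α • u + β • w) = conj α * α * B u u := by
  simp only [map_add, map_smulₛₗ, add_apply, smul_apply, hw, huw, hwu, smul_eq_mul,
    RingHom.id_apply]
  ring

theorem apply_ne_smul_of_det_ne_zero (T : E →ₗ[ℂ] E) {u w : E} (hw : B w w = 0)
    (hwu : B w u = 0) (hD : B (T u) u * B (T w) w - B (T u) w * B (T w) u ≠ 0) (μ : ℂ) :
    T w ≠ μ • w := by
  rintro hTw
  apply hD
  simp [hTw, hw, hwu]

theorem disjoint_map_symm_span_pair (T : E ≃ₗ[ℂ] E) (hT : ∀ x y, B (T x) (T y) = B x y)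
    {u₀ w u₂ : E} (hu₀ : B u₀ u₀ = 1) (hu₂ : B u₂ u₂ = -1) (hw : B w w = 0)
    (hu₀w : B u₀ w = 0) (hwu₀ : B w u₀ = 0) (hu₂w : B u₂ w = 0) (hwu₂ : B w u₂ = 0)
    (hTw : ∀ μ : ℂ, T w ≠ μ • w) :
    Disjoint ((span ℂ {u₀, w}).map T.symm.toLinearMap) (span ℂ {w, u₂}) := by
  rw [disjoint_def]
  intro x hxU hx
  rw [mem_map_equiv, LinearEquiv.symm_symm] at hxU
  obtain ⟨α, β, hαβ⟩ := mem_span_pair.mp hxU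
  obtain ⟨b, c, rfl⟩ := mem_span_pair.mp hx
  have hnorm := hT (b • w + c • u₂) (b • w + c • u₂)
  rw [← hαβ, add_comm (b • w), apply_smul_add_smul_self_of_isotropic B hw hu₀w hwu₀,
    apply_smul_add_smul_self_of_isotropic B hw hu₂w hwu₂, hu₀, hu₂] at hnorm
  obtain ⟨rfl, rfl⟩ := RCLike.eq_zero_and_eq_zero_of_conj_mul_add_conj_mul (a := α) (b := c)
    (by linear_combination hnorm)
  simp only [zero_smul, zero_add, add_zero] at hαβ ⊢
  rcases eq_or_ne b 0 with rfl | hb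
  · exact zero_smul ℂ w
  · refine absurd ?_ (hTw (b⁻¹ * β))
    rw [mul_smul, hαβ, map_smul, inv_smul_smul₀ hb]

end LinearMap

/-- Nonresonant case `D̊ ≠ 0`: the intersection `T⁻¹[span{e₊,e₀}] ∩ span{e₊,e₀,e₁}`
is one-dimensional, and any nonzero `v = a e₊ + b e₀ + c e₁` in it has `a ≠ 0`.
Basis convention: `e 0 = e₊`, `e 1 = e₀`, `e 2 = e₁`, `e 3 = e₂`. -/
theorem stmt_8
    (B : (Fin 4 → ℂ) → (Fin 4 → ℂ) → ℂ)
    (hadd₁ : ∀ x y z, B (x + y) z = B x z + B y z)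
    (hadd₂ : ∀ x y z, B x (y + z) = B x y + B x z)
    (hsmul₁ : ∀ (c : ℂ) (x y), B (c • x) y = conj c * B x y)
    (hsmul₂ : ∀ (c : ℂ) (x y), B x (c • y) = c * B x y)
    (e : Module.Basis (Fin 4) ℂ (Fin 4 → ℂ))
    (hG : ∀ i j, B (e i) (e j) =
      !![(1:ℂ),0,0,0; 0,0,0,-1; 0,0,-1,0; 0,-1,0,0] i j)
    (T : (Fin 4 → ℂ) ≃ₗ[ℂ] (Fin 4 → ℂ))
    (hT : ∀ x y, B (T x) (T y) = B x y)
    (hD : B (T (e 0)) (e 0) * B (T (e 1)) (e 1)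
      - B (T (e 0)) (e 1) * B (T (e 1)) (e 0) ≠ 0) :
    Module.finrank ℂ
      ↥((Submodule.span ℂ ({e 0, e 1} : Set (Fin 4 → ℂ))).map T.symm.toLinearMap
        ⊓ Submodule.span ℂ ({e 0, e 1, e 2} : Set (Fin 4 → ℂ))) = 1 ∧
    ∀ a b c : ℂ,
      a • e 0 + b • e 1 + c • e 2
        ∈ (Submodule.span ℂ ({e 0, e 1} : Set (Fin 4 → ℂ))).map T.symm.toLinearMap →
      a • e 0 + b • e 1 + c • e 2 ≠ 0 → a ≠ 0 := by
  let Bₛ : (Fin 4 → ℂ) →ₗ⋆[ℂ] (Fin 4 → ℂ) →ₗ[ℂ] ℂ :=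
    LinearMap.mk₂'ₛₗ _ _ B hadd₁ hsmul₁ hadd₂ hsmul₂
  have hG' (i j) : Bₛ (e i) (e j) = _ := hG i j
  set U := (span ℂ ({e 0, e 1} : Set (Fin 4 → ℂ))).map T.symm.toLinearMap
  set V := span ℂ ({e 0, e 1, e 2} : Set (Fin 4 → ℂ))
  set W := span ℂ ({e 1, e 2} : Set (Fin 4 → ℂ))
  have hUW : Disjoint U W :=
    Bₛ.disjoint_map_symm_span_pair T hT (by simpa using hG' 0 0) (by simpa using hG' 2 2)
      (by simpa using hG' 1 1) (by simpa using hG' 0 1) (by simpa using hG' 1 0)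
      (by simpa using hG' 2 1) (by simpa using hG' 1 2)
      (Bₛ.apply_ne_smul_of_det_ne_zero T.toLinearMap (by simpa using hG' 1 1)
        (by simpa using hG' 1 0) hD)
  have hU : finrank ℂ U = 2 := by
    rw [LinearEquiv.finrank_map_eq, e.finrank_span_pair (by decide)]
  have hV : finrank ℂ V = 3 := e.finrank_span_triple (by decide) (by decide) (by decide)
  have hW : finrank ℂ W = 2 := e.finrank_span_pair (by decide)
  have hWV : W ≤ V := span_mono (Set.subset_insert _ _)
  refine ⟨le_antisymm ?_ ?_, ?_⟩
  · have := finrank_add_finrank_le_of_disjoint_of_le (hUW.mono_left inf_le_left) inf_le_right hWV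
    omega
  · have := finrank_add_finrank_le_finrank_add_finrank_inf U V
    rw [finrank_fin_fun] at this
    omega
  · rintro a b c hmem hne rfl
    rw [zero_smul, zero_add] at hmem hne
    exact hne (disjoint_def.mp hUW _ hmem
      (add_mem (smul_mem _ _ (subset_span (by simp))) (smul_mem _ _ (subset_span (by simp)))))
end

section
/- Let [·,·] have the frozen-mode Gram matrix and T be flux-unitary with D̊ ≠ 0 (nonresonant case). Then the two-dimensional space T⁻¹[span{e₊,e₀}] is spanned by two vectors v̊₊₁ and v̊₊₂ uniquely determined by the conditions: the e₊-component of v̊₊₁ is 1 and its e₂-component is 0; the e₊-component of v̊₊₂ is 0 and its e₂-component is 1. -/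
open scoped ComplexConjugate

/-!
Through the Gram matrix, the `e₊`- and `e₂`-components of `v` are `[e₊, v]` and `−[e₀, v]`
(indices: `e 0 = e₊`, `e 1 = e₀`, `e 3 = e₂`). Parametrizing `T⁻¹[span{e₊, e₀}]` by
`v = T⁻¹(a e₊ + b e₀)` and using `[x, T⁻¹ u] = [T x, u]`, the pair of components of `v` is
the matrix `!![[T e₊, e₊], [T e₊, e₀]; −[T e₀, e₊], −[T e₀, e₀]]` applied to `(a, b)`. Its
determinant is `−D̊ ≠ 0`, so the component pair is a bijection from the plane onto `K²`: this gives
existence and uniqueness of `v̊₊₁, v̊₊₂`, and injectivity expresses every vector of the plane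
through them.
-/

open Function Set Submodule
open scoped Matrix

theorem existsUnique_mem_range_and_eq_of_bijective_comp {α β γ : Type*} {f : β → γ} {g : α → β}
    (h : Bijective (f ∘ g)) (t : γ) : ∃! v, v ∈ range g ∧ f v = t := by
  obtain ⟨a, ha⟩ := h.2 t
  refine ⟨g a, ⟨mem_range_self a, ha⟩, ?_⟩
  rintro _ ⟨⟨b, rfl⟩, hb⟩
  exact congrArg g (h.1 (hb.trans ha.symm))

theorem Submodule.eq_span_pair_of_injOn {R V : Type*} [Semiring R] [AddCommMonoid V] [Module R V]
    {W : Submodule R V} {f : V →ₗ[R] Fin 2 → R} (hf : InjOn f W) {v₁ v₂ : V}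
    (h₁ : v₁ ∈ W) (h₂ : v₂ ∈ W) (hf₁ : f v₁ = ![1, 0]) (hf₂ : f v₂ = ![0, 1]) :
    W = span R {v₁, v₂} := by
  refine le_antisymm (fun w hw => ?_) (span_le.2 (pair_subset h₁ h₂))
  have hw' : f w 0 • v₁ + f w 1 • v₂ ∈ W := add_mem (smul_mem _ _ h₁) (smul_mem _ _ h₂)
  have : w = f w 0 • v₁ + f w 1 • v₂ := hf hw hw' <| by
    ext i; fin_cases i <;> simp [hf₁, hf₂]
  exact this ▸ mem_span_pair.2 ⟨_, _, rfl⟩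

namespace Module.Basis

variable {ι R M : Type*} [CommSemiring R] [AddCommMonoid M] [Module R M]

noncomputable def coordPair (e : Basis ι R M) (i j : ι) : M →ₗ[R] Fin 2 → R :=
  LinearMap.pi ![e.coord i, e.coord j]

@[simp]
theorem coordPair_apply (e : Basis ι R M) (i j : ι) (v : M) :
    e.coordPair i j v = ![e.repr v i, e.repr v j] := by
  ext k; fin_cases k <;> rfl

theorem coordPair_eq_iff (e : Basis ι R M) {i j : ι} {v : M} {a b : R} :
    e.coordPair i j v = ![a, b] ↔ e.repr v i = a ∧ e.repr v j = b := by
  simp [funext_iff, Fin.forall_fin_two]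

end Module.Basis

section GramCoordinates

variable {K V : Type*} [Field K] [AddCommGroup V] [Module K V]
  {B : V → V → K} (hadd₂ : ∀ x y z, B x (y + z) = B x y + B x z)
  (hsmul₂ : ∀ (c : K) (x y), B x (c • y) = c * B x y)
  {e : Module.Basis (Fin 4) K V}
  (hG : ∀ i j, B (e i) (e j) = !![(1:K),0,0,0; 0,0,0,-1; 0,0,-1,0; 0,-1,0,0] i j)

include hadd₂ hsmul₂ hG

theorem repr_zero_eq_of_gram (v : V) : e.repr v 0 = B (e 0) v := by
  conv_rhs => rw [← e.sum_repr v, Fin.sum_univ_four]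
  simp [hadd₂, hsmul₂, hG]

theorem repr_three_eq_of_gram (v : V) : e.repr v 3 = -B (e 1) v := by
  conv_rhs => rw [← e.sum_repr v, Fin.sum_univ_four]
  simp [hadd₂, hsmul₂, hG]

theorem coordPair_comp_symm_linearCombination (T : V ≃ₗ[K] V)
    (hT : ∀ x y, B (T x) (T y) = B x y) :
    ⇑(e.coordPair 0 3 ∘ₗ T.symm.toLinearMap ∘ₗ Fintype.linearCombination K ![e 0, e 1]) =
      (!![B (T (e 0)) (e 0), B (T (e 0)) (e 1); -B (T (e 1)) (e 0), -B (T (e 1)) (e 1)] *ᵥ ·) := by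
  have hadj : ∀ x u, B x (T.symm u) = B (T x) u := fun x u => by
    rw [← hT, T.apply_symm_apply]
  ext c k
  fin_cases k <;>
    simp [repr_zero_eq_of_gram hadd₂ hsmul₂ hG, repr_three_eq_of_gram hadd₂ hsmul₂ hG, hadj,
      Fintype.linearCombination_apply, Matrix.mulVec, dotProduct] <;> ring

end GramCoordinates

theorem stmt_9_general
    (B : (Fin 4 → ℂ) → (Fin 4 → ℂ) → ℂ)
    (hadd₂ : ∀ x y z, B x (y + z) = B x y + B x z)
    (hsmul₂ : ∀ (c : ℂ) (x y), B x (c • y) = c * B x y)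
    (e : Module.Basis (Fin 4) ℂ (Fin 4 → ℂ))
    (hG : ∀ i j, B (e i) (e j) =
      !![(1:ℂ),0,0,0; 0,0,0,-1; 0,0,-1,0; 0,-1,0,0] i j)
    (T : (Fin 4 → ℂ) ≃ₗ[ℂ] (Fin 4 → ℂ))
    (hT : ∀ x y, B (T x) (T y) = B x y)
    (hD : B (T (e 0)) (e 0) * B (T (e 1)) (e 1)
      - B (T (e 0)) (e 1) * B (T (e 1)) (e 0) ≠ 0)
    (W : Submodule ℂ (Fin 4 → ℂ))
    (hW : W = (Submodule.span ℂ ({e 0, e 1} : Set (Fin 4 → ℂ))).map T.symm.toLinearMap) :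
    (∃! v1, v1 ∈ W ∧ e.repr v1 0 = 1 ∧ e.repr v1 3 = 0) ∧
    (∃! v2, v2 ∈ W ∧ e.repr v2 0 = 0 ∧ e.repr v2 3 = 1) ∧
    ∀ v1 v2,
      (v1 ∈ W ∧ e.repr v1 0 = 1 ∧ e.repr v1 3 = 0) →
      (v2 ∈ W ∧ e.repr v2 0 = 0 ∧ e.repr v2 3 = 1) →
      W = Submodule.span ℂ ({v1, v2} : Set (Fin 4 → ℂ)) := by
  set g := T.symm.toLinearMap ∘ₗ Fintype.linearCombination ℂ ![e 0, e 1]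
  have hWg : (W : Set (Fin 4 → ℂ)) = range g := by
    rw [hW, ← LinearMap.coe_range, LinearMap.range_comp, Fintype.range_linearCombination,
      Matrix.range_cons_cons_empty]
  have hdet : IsUnit (!![B (T (e 0)) (e 0), B (T (e 0)) (e 1);
      -B (T (e 1)) (e 0), -B (T (e 1)) (e 1)]) := by
    rw [Matrix.isUnit_iff_isUnit_det, Matrix.det_fin_two_of, isUnit_iff_ne_zero]
    contrapose! hD
    linear_combination -hD
  have hbij : Bijective (e.coordPair 0 3 ∘ g) := by
    rw [← LinearMap.coe_comp, coordPair_comp_symm_linearCombination hadd₂ hsmul₂ hG T hT]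
    exact ⟨Matrix.mulVec_injective_iff_isUnit.2 hdet, Matrix.mulVec_surjective_iff_isUnit.2 hdet⟩
  have hinj : InjOn (e.coordPair 0 3) W := hWg ▸ hbij.1.injOn_range
  simp only [← SetLike.mem_coe, hWg, ← Module.Basis.coordPair_eq_iff]
  refine ⟨existsUnique_mem_range_and_eq_of_bijective_comp hbij _,
    existsUnique_mem_range_and_eq_of_bijective_comp hbij _, ?_⟩
  rintro v₁ v₂ ⟨h₁, hf₁⟩ ⟨h₂, hf₂⟩
  rw [← hWg] at h₁ h₂
  exact eq_span_pair_of_injOn hinj h₁ h₂ hf₁ hf₂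

/-- Nonresonant case: `T⁻¹[span{e₊,e₀}]` is spanned by the two vectors uniquely
determined by having (`e₊`-component, `e₂`-component) equal to `(1,0)` and `(0,1)`
respectively.  Basis convention: `e 0 = e₊`, `e 1 = e₀`, `e 2 = e₁`, `e 3 = e₂`;
components are coordinates with respect to this basis. -/
theorem stmt_9
    (B : (Fin 4 → ℂ) → (Fin 4 → ℂ) → ℂ)
    (hadd₁ : ∀ x y z, B (x + y) z = B x z + B y z)
    (hadd₂ : ∀ x y z, B x (y + z) = B x y + B x z)
    (hsmul₁ : ∀ (c : ℂ) (x y), B (c • x) y = conj c * B x y)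
    (hsmul₂ : ∀ (c : ℂ) (x y), B x (c • y) = c * B x y)
    (e : Module.Basis (Fin 4) ℂ (Fin 4 → ℂ))
    (hG : ∀ i j, B (e i) (e j) =
      !![(1:ℂ),0,0,0; 0,0,0,-1; 0,0,-1,0; 0,-1,0,0] i j)
    (T : (Fin 4 → ℂ) ≃ₗ[ℂ] (Fin 4 → ℂ))
    (hT : ∀ x y, B (T x) (T y) = B x y)
    (hD : B (T (e 0)) (e 0) * B (T (e 1)) (e 1)
      - B (T (e 0)) (e 1) * B (T (e 1)) (e 0) ≠ 0)
    (W : Submodule ℂ (Fin 4 → ℂ))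
    (hW : W = (Submodule.span ℂ ({e 0, e 1} : Set (Fin 4 → ℂ))).map T.symm.toLinearMap) :
    (∃! v1, v1 ∈ W ∧ e.repr v1 0 = 1 ∧ e.repr v1 3 = 0) ∧
    (∃! v2, v2 ∈ W ∧ e.repr v2 0 = 0 ∧ e.repr v2 3 = 1) ∧
    ∀ v1 v2,
      (v1 ∈ W ∧ e.repr v1 0 = 1 ∧ e.repr v1 3 = 0) →
      (v2 ∈ W ∧ e.repr v2 0 = 0 ∧ e.repr v2 3 = 1) →
      W = Submodule.span ℂ ({v1, v2} : Set (Fin 4 → ℂ)) :=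
  stmt_9_general B hadd₂ hsmul₂ e hG T hT hD W hW
end

section
/- Let [·,·] have the frozen-mode Gram matrix and let T be flux-unitary with T e₀ = ℓ e₀, ℓ ≠ 0 (resonant case), and assume [e₊, T e₁] ≠ 0. Then the space T⁻¹[span{e₊,e₀}] is contained in span{e₊,e₀,e₁} and is spanned by e₀ together with a unique vector ẘ₊ of the form ẘ₊ = e₊ + c e₁ with c ≠ 0. -/
/-! `W = T⁻¹[span {e₊, e₀}]` is spanned by `T⁻¹ e₀ = ℓ⁻¹ e₀` and `u = T⁻¹ e₊`. Pairing with `e₀`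
and `T e₀ = ℓ e₀` shows that `u` has no `e₂`-component, so `u = a e₊ + b e₀ + c e₁`, and
`[u, u] = [e₊, e₊] = 1` becomes `|a|² - |c|² = 1`, so `a ≠ 0` and `ẘ₊ = a⁻¹ (u - b e₀)`.
Its `e₁`-coefficient `c / a` is nonzero because `[u, e₁] = [e₊, T e₁] ≠ 0`. It is unique since
`e₁ ∉ W`: `T` preserves `[·,·]`, which is nonnegative on `span {e₊, e₀}` but `[e₁, e₁] = -1`. -/

open scoped ComplexConjugate

namespace Submodule

variable {K M : Type*} [Field K] [AddCommGroup M] [Module K M]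

theorem span_pair_eq_of_eq_smul_add_smul {x y z : M} {a b : K} (ha : a ≠ 0)
    (h : z = a • y + b • x) : span K {x, z} = span K {x, y} := by
  have hx {s : Set M} (hs : x ∈ s) : x ∈ span K s := subset_span hs
  apply le_antisymm <;> refine span_le.mpr (Set.insert_subset_iff.mpr ⟨hx (by simp), ?_⟩)
  · rw [Set.singleton_subset_iff, SetLike.mem_coe, h]
    exact add_mem (smul_mem _ _ (subset_span (by simp))) (smul_mem _ _ (hx (by simp)))
  · have hy : y = a⁻¹ • z - (a⁻¹ * b) • x := by
      rw [h, smul_add, smul_smul, inv_mul_cancel₀ ha, one_smul, smul_smul, add_sub_cancel_right]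
    rw [Set.singleton_subset_iff, SetLike.mem_coe, hy]
    exact sub_mem (smul_mem _ _ (subset_span (by simp))) (smul_mem _ _ (hx (by simp)))

theorem eq_of_add_smul_mem_of_notMem {W : Submodule K M} {y z : M} {c c' : K} (hz : z ∉ W)
    (h : y + c • z ∈ W) (h' : y + c' • z ∈ W) : c = c' := by
  by_contra hne
  have hdiff : (c - c') • z ∈ W := by
    convert W.sub_mem h h' using 1
    module
  exact hz ((W.smul_mem_iff (sub_ne_zero.mpr hne)).mp hdiff)

theorem map_symm_span_pair_of_apply_eq_smul (T : M ≃ₗ[K] M) {x y : M} {ℓ : K} (hℓ0 : ℓ ≠ 0)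
    (hℓ : T y = ℓ • y) : (span K {x, y}).map T.symm.toLinearMap = span K {y, T.symm x} := by
  have hTy : T.symm y = ℓ⁻¹ • y := by
    rw [T.symm_apply_eq, map_smul, hℓ, smul_smul, inv_mul_cancel₀ hℓ0, one_smul]
  rw [map_span, Set.image_pair, LinearEquiv.coe_coe, hTy, Set.pair_comm, span_insert,
    span_singleton_smul_eq (inv_ne_zero hℓ0).isUnit, ← span_insert]

end Submodule

section Sesquilinear

variable {ι M : Type*} [AddCommGroup M] [Module ℂ M]

theorem sesq_eq_sum_repr [Fintype ι] {B : M → M → ℂ}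
    (hadd₁ : ∀ x y z, B (x + y) z = B x z + B y z)
    (hadd₂ : ∀ x y z, B x (y + z) = B x y + B x z)
    (hsmul₁ : ∀ (c : ℂ) (x y), B (c • x) y = conj c * B x y)
    (hsmul₂ : ∀ (c : ℂ) (x y), B x (c • y) = c * B x y)
    (e : Module.Basis ι ℂ M) (x y : M) :
    B x y = ∑ i, ∑ j, conj (e.repr x i) * e.repr y j * B (e i) (e j) := by
  let B' : M →ₗ⋆[ℂ] M →ₗ[ℂ] ℂ := LinearMap.mk₂'ₛₗ _ _ B hadd₁ hsmul₁ hadd₂ hsmul₂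
  have h := LinearMap.sum_repr_mul_repr_mulₛₗ e e (B := B') x y
  simp only [B', LinearMap.mk₂'ₛₗ_apply, Finsupp.sum_fintype, smul_eq_mul, map_zero, zero_mul,
    mul_zero, Finset.sum_const_zero, implies_true] at h
  simp only [← h, RingHom.id_apply, mul_assoc]

def HasFrozenGram (B : M → M → ℂ) (e : Module.Basis (Fin 4) ℂ M) : Prop :=
  ∀ x y, B x y = conj (e.repr x 0) * e.repr y 0 - conj (e.repr x 1) * e.repr y 3
    - conj (e.repr x 2) * e.repr y 2 - conj (e.repr x 3) * e.repr y 1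

theorem hasFrozenGram_of_gram {B : M → M → ℂ}
    (hadd₁ : ∀ x y z, B (x + y) z = B x z + B y z)
    (hadd₂ : ∀ x y z, B x (y + z) = B x y + B x z)
    (hsmul₁ : ∀ (c : ℂ) (x y), B (c • x) y = conj c * B x y)
    (hsmul₂ : ∀ (c : ℂ) (x y), B x (c • y) = c * B x y)
    {e : Module.Basis (Fin 4) ℂ M}
    (hG : ∀ i j, B (e i) (e j) = !![(1:ℂ),0,0,0; 0,0,0,-1; 0,0,-1,0; 0,-1,0,0] i j) :
    HasFrozenGram B e := by
  intro x y
  rw [sesq_eq_sum_repr hadd₁ hadd₂ hsmul₁ hsmul₂ e]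
  simp [Fin.sum_univ_four, hG]
  ring

namespace HasFrozenGram

variable {B : M → M → ℂ} {e : Module.Basis (Fin 4) ℂ M} {T : M ≃ₗ[ℂ] M}

theorem repr_symm_three (hB : HasFrozenGram B e) (hT : ∀ x y, B (T x) (T y) = B x y) {ℓ : ℂ}
    (hℓ : T (e 1) = ℓ • e 1) (x : M) : e.repr (T.symm x) 3 = conj ℓ * e.repr x 3 := by
  have h := hT (e 1) (T.symm x)
  rw [hℓ, T.apply_symm_apply, hB, hB] at h
  simpa using h.symm

theorem repr_symm_zero_two_ne_zero (hB : HasFrozenGram B e)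
    (hT : ∀ x y, B (T x) (T y) = B x y) (hgen : B (e 0) (T (e 2)) ≠ 0) :
    e.repr (T.symm (e 0)) 2 ≠ 0 := by
  have h := hT (T.symm (e 0)) (e 2)
  rw [T.apply_symm_apply] at h
  rw [h, hB] at hgen
  simpa using hgen

theorem repr_symm_zero_ne_zero (hB : HasFrozenGram B e) (hT : ∀ x y, B (T x) (T y) = B x y)
    {ℓ : ℂ} (hℓ : T (e 1) = ℓ • e 1) : e.repr (T.symm (e 0)) 0 ≠ 0 := by
  intro h0
  have hu3 := hB.repr_symm_three hT hℓ (e 0)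
  have h := hT (T.symm (e 0)) (T.symm (e 0))
  rw [T.apply_symm_apply, hB, hB, hu3, h0] at h
  simp [Complex.conj_mul'] at h
  have h' : (1 : ℝ) = -‖e.repr (T.symm (e 0)) 2‖ ^ 2 := by exact_mod_cast h
  nlinarith [sq_nonneg ‖e.repr (T.symm (e 0)) 2‖]

theorem two_notMem_map_symm_span (hB : HasFrozenGram B e)
    (hT : ∀ x y, B (T x) (T y) = B x y) :
    e 2 ∉ (Submodule.span ℂ {e 0, e 1}).map T.symm.toLinearMap := by
  rw [Submodule.mem_map_equiv, LinearEquiv.symm_symm]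
  intro hmem
  obtain ⟨a, b, hab⟩ := Submodule.mem_span_pair.mp hmem
  have h := hT (e 2) (e 2)
  rw [← hab, hB, hB] at h
  simp [Complex.conj_mul'] at h
  have h' : ‖a‖ ^ 2 = (-1 : ℝ) := by exact_mod_cast h
  nlinarith [sq_nonneg ‖a‖]

end HasFrozenGram

end Sesquilinear

/-- Resonant case `T e₀ = ℓ e₀`, `ℓ ≠ 0`, with `[e₊, T e₁] ≠ 0`: the space
`T⁻¹[span{e₊,e₀}]` is contained in `span{e₊,e₀,e₁}` and is spanned by `e₀`
together with a unique vector `ẘ₊ = e₊ + c e₁` with `c ≠ 0`.  Basis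
convention: `e 0 = e₊`, `e 1 = e₀`, `e 2 = e₁`, `e 3 = e₂`. -/
theorem stmt_11
    (B : (Fin 4 → ℂ) → (Fin 4 → ℂ) → ℂ)
    (hadd₁ : ∀ x y z, B (x + y) z = B x z + B y z)
    (hadd₂ : ∀ x y z, B x (y + z) = B x y + B x z)
    (hsmul₁ : ∀ (c : ℂ) (x y), B (c • x) y = conj c * B x y)
    (hsmul₂ : ∀ (c : ℂ) (x y), B x (c • y) = c * B x y)
    (e : Module.Basis (Fin 4) ℂ (Fin 4 → ℂ))
    (hG : ∀ i j, B (e i) (e j) =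
      !![(1:ℂ),0,0,0; 0,0,0,-1; 0,0,-1,0; 0,-1,0,0] i j)
    (T : (Fin 4 → ℂ) ≃ₗ[ℂ] (Fin 4 → ℂ))
    (hT : ∀ x y, B (T x) (T y) = B x y)
    (ℓ : ℂ) (hℓ0 : ℓ ≠ 0) (hℓ : T (e 1) = ℓ • e 1)
    (hgen : B (e 0) (T (e 2)) ≠ 0)
    (W : Submodule ℂ (Fin 4 → ℂ))
    (hW : W = (Submodule.span ℂ ({e 0, e 1} : Set (Fin 4 → ℂ))).map T.symm.toLinearMap) :
    W ≤ Submodule.span ℂ ({e 0, e 1, e 2} : Set (Fin 4 → ℂ)) ∧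
    ∃! w, w ∈ W ∧ (∃ c : ℂ, c ≠ 0 ∧ w = e 0 + c • e 2) ∧
      W = Submodule.span ℂ ({e 1, w} : Set (Fin 4 → ℂ)) := by
  have hB := hasFrozenGram_of_gram hadd₁ hadd₂ hsmul₁ hsmul₂ hG
  set u := T.symm (e 0)
  set u₀ := e.repr u 0
  set u₁ := e.repr u 1
  set u₂ := e.repr u 2
  have hu0 : u₀ ≠ 0 := hB.repr_symm_zero_ne_zero hT hℓ
  have hu2 : u₂ ≠ 0 := hB.repr_symm_zero_two_ne_zero hT hgen
  have hu : u = u₀ • e 0 + u₁ • e 1 + u₂ • e 2 := by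
    have hu3 : e.repr u 3 = 0 := by simpa using hB.repr_symm_three hT hℓ (e 0)
    conv_lhs => rw [← e.sum_repr u]
    rw [Fin.sum_univ_four, hu3, zero_smul, add_zero]
  have hWu : W = Submodule.span ℂ {e 1, u} :=
    hW.trans (Submodule.map_symm_span_pair_of_apply_eq_smul T hℓ0 hℓ)
  set c := u₂ / u₀
  have hWw : W = Submodule.span ℂ {e 1, e 0 + c • e 2} := by
    refine hWu.trans (Submodule.span_pair_eq_of_eq_smul_add_smul (b := u₁) hu0 ?_)
    rw [hu, smul_add, smul_smul, mul_div_cancel₀ _ hu0]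
    abel
  have hwW : e 0 + c • e 2 ∈ W := hWw ▸ Submodule.subset_span (by simp)
  refine ⟨?_, ⟨e 0 + c • e 2, ⟨hwW, ⟨c, div_ne_zero hu2 hu0, rfl⟩, hWw⟩, ?_⟩⟩
  · rw [hWu, Submodule.span_le, Set.insert_subset_iff, Set.singleton_subset_iff, SetLike.mem_coe,
      hu]
    refine ⟨Submodule.subset_span (by simp), add_mem (add_mem ?_ ?_) ?_⟩ <;>
      exact Submodule.smul_mem _ _ (Submodule.subset_span (by simp))
  · rintro _ ⟨hw'W, ⟨c', -, rfl⟩, -⟩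
    rw [Submodule.eq_of_add_smul_mem_of_notMem (hW ▸ hB.two_notMem_map_symm_span hT) hw'W hwW]
end

section
/- Let M(z) = Σₙ₌₀^∞ Mₙ zⁿ be a 2×2 matrix power series and b(z) = Σₙ₌₁^∞ bₙ zⁿ a vector power series, both with positive radius of convergence. Suppose M₀ is nonzero and noninvertible with null space spanned by s and range spanned by r, and assume: sᵀr = 0, sᵀb₁ = 0, sᵀM₁s = 0, and the 2×2 matrix 𝓜₀ = [[sᵀM₂s, sᵀM₁r],[rᵀM₁s, rᵀM₀r]] is invertible. Then the equation M(z) t(z) = b(z) admits a formal power series solution t(z) = Σₙ₌₀^∞ tₙ zⁿ with positive radius of convergence and with t₀ ∈ span{s}. -/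
/-!
Write `t = x s + y r` with `y(0) = 0`. Pairing the equation with `s` in degree `n + 2` and with
`r` in degree `n + 1` leaves, thanks to the conditions on `M₀`, `M₁`, `b₀`, `b₁`, the regular
`2 × 2` system `𝓜(z) (x, y / z) = β(z)` of power series whose constant term `𝓜(0) = 𝓜₀` is
invertible. Its solution `det⁻¹ · adj 𝓜 · β` converges, because power series with geometrically
bounded coefficients form a subring closed under inversion: the coefficients of `1 / f` satisfy a
convolution inequality whose solutions grow at most geometrically. Finally `s` and `r` are
independent (otherwise the second row of `𝓜₀` vanishes), so the two pairings give back the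
equation itself.
-/

open Finset hiding mk
open Matrix PowerSeries

def GeometricallyBounded {E : Type*} [SeminormedAddCommGroup E] (f : ℕ → E) : Prop :=
  ∃ C R : ℝ, ∀ n, ‖f n‖ ≤ C * R ^ n

namespace GeometricallyBounded

section NormedGroup

variable {E : Type*} [SeminormedAddCommGroup E] {f g : ℕ → E}

theorem exists_nonneg (hf : GeometricallyBounded f) :
    ∃ C R : ℝ, 0 ≤ C ∧ 1 ≤ R ∧ ∀ n, ‖f n‖ ≤ C * R ^ n := by
  obtain ⟨C, R, h⟩ := hf
  refine ⟨|C|, max |R| 1, abs_nonneg C, le_max_right _ _, fun n => ?_⟩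
  calc ‖f n‖ ≤ |C * R ^ n| := (h n).trans (le_abs_self _)
    _ = |C| * |R| ^ n := by rw [abs_mul, abs_pow]
    _ ≤ |C| * max |R| 1 ^ n := by gcongr; exact le_max_left _ _

theorem _root_.geometricallyBounded_iff :
    GeometricallyBounded f ↔ ∃ C ρ : ℝ, 0 < ρ ∧ ∀ n, ‖f n‖ ≤ C / ρ ^ n := by
  constructor
  · intro hf
    obtain ⟨C, R, -, hR, h⟩ := hf.exists_nonneg
    exact ⟨C, R⁻¹, by positivity, by simpa [div_eq_mul_inv, inv_pow] using h⟩
  · rintro ⟨C, ρ, -, h⟩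
    exact ⟨C, ρ⁻¹, by simpa [div_eq_mul_inv, inv_pow] using h⟩

theorem zero : GeometricallyBounded fun _ => (0 : E) := ⟨0, 0, by simp⟩

theorem add (hf : GeometricallyBounded f) (hg : GeometricallyBounded g) :
    GeometricallyBounded fun n => f n + g n := by
  obtain ⟨C, R, hC, hR, hfR⟩ := hf.exists_nonneg
  obtain ⟨C', R', hC', hR', hgR'⟩ := hg.exists_nonneg
  refine ⟨C + C', max R R', fun n => ?_⟩
  calc ‖f n + g n‖ ≤ C * R ^ n + C' * R' ^ n :=
        (norm_add_le _ _).trans (add_le_add (hfR n) (hgR' n))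
    _ ≤ C * max R R' ^ n + C' * max R R' ^ n := by
        gcongr <;> linarith [le_max_left R R', le_max_right R R']
    _ = (C + C') * max R R' ^ n := by ring

theorem neg (hf : GeometricallyBounded f) : GeometricallyBounded fun n => -f n := by
  simpa [GeometricallyBounded] using hf

theorem sum {ι : Type*} (s : Finset ι) {f : ι → ℕ → E}
    (h : ∀ i ∈ s, GeometricallyBounded (f i)) : GeometricallyBounded fun n => ∑ i ∈ s, f i n := by
  simpa only [← Finset.sum_fn] using
    Finset.sum_induction f GeometricallyBounded (fun _ _ => add) zero h

theorem comp_add (hf : GeometricallyBounded f) (k : ℕ) :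
    GeometricallyBounded fun n => f (n + k) := by
  obtain ⟨C, R, h⟩ := hf
  exact ⟨C * R ^ k, R, fun n => (h (n + k)).trans_eq (by ring)⟩

end NormedGroup

section NormedSpace

variable {𝕜 E : Type*} [NormedField 𝕜] [SeminormedAddCommGroup E] [NormedSpace 𝕜 E]

theorem const_smul {f : ℕ → E} (hf : GeometricallyBounded f) (c : 𝕜) :
    GeometricallyBounded fun n => c • f n := by
  obtain ⟨C, R, h⟩ := hf
  exact ⟨‖c‖ * C, R, fun n => by
    rw [norm_smul, mul_assoc]; exact mul_le_mul_of_nonneg_left (h n) (norm_nonneg c)⟩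

theorem smul_const {f : ℕ → 𝕜} (hf : GeometricallyBounded f) (v : E) :
    GeometricallyBounded fun n => f n • v := by
  obtain ⟨C, R, h⟩ := hf
  exact ⟨C * ‖v‖, R, fun n => by
    rw [norm_smul, mul_right_comm]; exact mul_le_mul_of_nonneg_right (h n) (norm_nonneg v)⟩

end NormedSpace

theorem dotProduct {𝕜 ι : Type*} [NormedField 𝕜] [Fintype ι] {v : ℕ → ι → 𝕜}
    (hv : ∀ i, GeometricallyBounded fun n => v n i) (a : ι → 𝕜) :
    GeometricallyBounded fun n => a ⬝ᵥ v n := by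
  have := sum univ fun i _ => (hv i).const_smul (a i)
  simpa [_root_.dotProduct, Finset.sum_fn] using this

theorem dotProduct_mulVec {𝕜 ι : Type*} [NormedField 𝕜] [Fintype ι] {M : ℕ → Matrix ι ι 𝕜}
    (hM : ∀ i j, GeometricallyBounded fun n => M n i j) (a c : ι → 𝕜) :
    GeometricallyBounded fun n => a ⬝ᵥ M n *ᵥ c :=
  dotProduct (fun i => by simpa [mulVec, dotProduct_comm] using dotProduct (hM i) c) a

theorem cauchyProduct {R : Type*} [SeminormedRing R] {f g : ℕ → R} (hf : GeometricallyBounded f)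
    (hg : GeometricallyBounded g) :
    GeometricallyBounded fun n => ∑ p ∈ antidiagonal n, f p.1 * g p.2 := by
  obtain ⟨C, Q, hC, hQ, hfQ⟩ := hf.exists_nonneg
  obtain ⟨C', Q', hC', hQ', hgQ'⟩ := hg.exists_nonneg
  set R := max Q Q'
  have hterm : ∀ n : ℕ, ∀ p ∈ antidiagonal n, ‖f p.1 * g p.2‖ ≤ C * C' * R ^ n := by
    intro n p hp
    rw [← mem_antidiagonal.1 hp, pow_add]
    calc ‖f p.1 * g p.2‖ ≤ C * Q ^ p.1 * (C' * Q' ^ p.2) :=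
          (norm_mul_le _ _).trans (mul_le_mul (hfQ _) (hgQ' _) (norm_nonneg _) (by positivity))
      _ ≤ C * R ^ p.1 * (C' * R ^ p.2) := by
          gcongr <;> linarith [le_max_left Q Q', le_max_right Q Q']
      _ = C * C' * (R ^ p.1 * R ^ p.2) := by ring
  refine ⟨C * C', 2 * R, fun n => ?_⟩
  calc ‖∑ p ∈ antidiagonal n, f p.1 * g p.2‖ ≤ ∑ p ∈ antidiagonal n, C * C' * R ^ n :=
        (norm_sum_le _ _).trans (sum_le_sum (hterm n))
    _ = (n + 1) * (C * C' * R ^ n) := by simp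
    _ ≤ 2 ^ n * (C * C' * R ^ n) := by
        gcongr; exact_mod_cast Nat.lt_two_pow_self
    _ = C * C' * (2 * R) ^ n := by ring

end GeometricallyBounded

theorem sum_range_pow_sub_le {x : ℝ} (h0 : 0 ≤ x) (h1 : x < 1) (n : ℕ) :
    ∑ k ∈ range n, x ^ (n - k) ≤ x / (1 - x) := by
  calc ∑ k ∈ range n, x ^ (n - k) = x * ∑ k ∈ range n, x ^ k := by
        rw [mul_sum, ← sum_range_reflect]
        refine sum_congr rfl fun k hk => ?_
        rw [← pow_succ']; congr 1; have := Finset.mem_range.1 hk; omega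
    _ ≤ x * (1 / (1 - x)) := by
        gcongr
        have := geom_sum_Ico_le_of_lt_one (m := 0) (n := n) h0 h1
        rwa [← range_eq_Ico, pow_zero] at this
    _ = x / (1 - x) := by ring

theorem geometricallyBounded_of_norm_le_convolution {E : Type*} [SeminormedAddCommGroup E]
    {a : ℕ → E} {D R : ℝ} (hD : 0 < D) (hR : 0 < R)
    (h : ∀ n, ‖a n‖ ≤ D * R ^ n + D * ∑ k ∈ range n, R ^ (n - k) * ‖a k‖) :
    GeometricallyBounded a := by
  -- with `Q = R (1 + 2D)`, both the forcing term and the convolution term stay below `D Qⁿ`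
  set x := (1 + 2 * D)⁻¹
  set Q := R * (1 + 2 * D)
  have hx0 : 0 ≤ x := by positivity
  have hx1 : x < 1 := inv_lt_one_of_one_lt₀ (by linarith)
  have hRQ : R = x * Q := by simp only [x, Q]; field_simp
  refine ⟨2 * D, Q, fun n => ?_⟩
  induction n using Nat.strong_induction_on with
  | _ n ih =>
  have hsum : ∑ k ∈ range n, R ^ (n - k) * ‖a k‖ ≤ 2 * D * Q ^ n * (x / (1 - x)) := by
    calc ∑ k ∈ range n, R ^ (n - k) * ‖a k‖ ≤ ∑ k ∈ range n, 2 * D * Q ^ n * x ^ (n - k) := by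
          refine sum_le_sum fun k hk => ?_
          have hkn := (Finset.mem_range.1 hk).le
          calc R ^ (n - k) * ‖a k‖ ≤ R ^ (n - k) * (2 * D * Q ^ k) := by
                gcongr; exact ih k (Finset.mem_range.1 hk)
            _ = 2 * D * Q ^ n * x ^ (n - k) := by
                rw [hRQ, ← pow_sub_mul_pow Q hkn, mul_pow]; ring
      _ = 2 * D * Q ^ n * ∑ k ∈ range n, x ^ (n - k) := by rw [mul_sum]
      _ ≤ 2 * D * Q ^ n * (x / (1 - x)) := by gcongr; exact sum_range_pow_sub_le hx0 hx1 n
  have hxD : 2 * D * (x / (1 - x)) = 1 := by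
    simp only [x]; field_simp; ring
  have hRn : R ^ n ≤ Q ^ n := by gcongr; exact le_mul_of_one_le_right hR.le (by linarith)
  calc ‖a n‖ ≤ D * R ^ n + D * (2 * D * Q ^ n * (x / (1 - x))) := (h n).trans (by gcongr)
    _ = D * R ^ n + D * Q ^ n := by rw [mul_right_comm (2 * D), hxD, one_mul]
    _ ≤ 2 * D * Q ^ n := by linarith [mul_le_mul_of_nonneg_left hRn hD.le]

section ConvergentPowerSeries

variable (R : Type*) [NormedRing R]

def convergentPowerSeries : Subring R⟦X⟧ where
  carrier := {f | GeometricallyBounded fun n => coeff n f}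
  mul_mem' {f g} hf hg := show GeometricallyBounded fun n => coeff n (f * g) by
    simpa only [coeff_mul] using hf.cauchyProduct hg
  one_mem' := ⟨‖(1 : R)‖, 1, fun n => by
    simp only [coeff_one]; split_ifs <;> simp⟩
  add_mem' {f g} hf hg := show GeometricallyBounded fun n => coeff n (f + g) by
    simpa only [map_add] using hf.add hg
  zero_mem' := show GeometricallyBounded fun n => coeff n (0 : R⟦X⟧) by
    simpa only [map_zero] using GeometricallyBounded.zero
  neg_mem' {f} hf := show GeometricallyBounded fun n => coeff n (-f) by
    simpa only [map_neg] using hf.neg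

variable {R}

theorem mk_mem_convergentPowerSeries_iff {f : ℕ → R} :
    mk f ∈ convergentPowerSeries R ↔ GeometricallyBounded f := by
  show (GeometricallyBounded fun n => coeff n (mk f)) ↔ _
  simp only [coeff_mk]

theorem X_mem_convergentPowerSeries : X ∈ convergentPowerSeries R :=
  ⟨‖(1 : R)‖, 1, fun n => by simp only [coeff_X]; split_ifs <;> simp⟩

end ConvergentPowerSeries

theorem inv_mem_convergentPowerSeries {𝕜 : Type*} [NormedField 𝕜] {f : 𝕜⟦X⟧}
    (hf : f ∈ convergentPowerSeries 𝕜) : f⁻¹ ∈ convergentPowerSeries 𝕜 := by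
  obtain ⟨C, R, hC, hR, hfR⟩ := GeometricallyBounded.exists_nonneg hf
  set K := ‖(constantCoeff f)⁻¹‖
  have hK : 0 ≤ K := norm_nonneg _
  refine geometricallyBounded_of_norm_le_convolution (D := K * C + K + 1) (R := R)
    (by positivity) (by linarith) fun n => ?_
  rw [coeff_inv]
  split_ifs with hn
  · subst hn
    simp only [pow_zero, range_zero, sum_empty, mul_zero, add_zero, mul_one]
    linarith [mul_nonneg hK hC]
  · have hsum : ∑ x ∈ antidiagonal n, ‖if x.2 < n then coeff x.1 f * coeff x.2 f⁻¹ else 0‖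
        ≤ C * ∑ k ∈ range n, R ^ (n - k) * ‖coeff k f⁻¹‖ := by
      rw [← Nat.sum_antidiagonal_swap]
      simp only [Prod.fst_swap, Prod.snd_swap]
      rw [Nat.sum_antidiagonal_eq_sum_range_succ
        (fun i j => ‖if i < n then coeff j f * coeff i f⁻¹ else 0‖), sum_range_succ,
        if_neg (lt_irrefl n), norm_zero, add_zero, mul_sum]
      refine sum_le_sum fun k hk => ?_
      rw [if_pos (Finset.mem_range.1 hk), ← mul_assoc]
      exact (norm_mul_le _ _).trans (mul_le_mul_of_nonneg_right (hfR _) (norm_nonneg _))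
    calc _ ≤ K * (C * ∑ k ∈ range n, R ^ (n - k) * ‖coeff k f⁻¹‖) := by
          rw [norm_mul, norm_neg]
          exact mul_le_mul_of_nonneg_left ((norm_sum_le _ _).trans hsum) hK
      _ ≤ (K * C + K + 1) * ∑ k ∈ range n, R ^ (n - k) * ‖coeff k f⁻¹‖ := by
          rw [← mul_assoc]; gcongr; linarith
      _ ≤ _ := le_add_of_nonneg_left (by positivity)

theorem exists_mulVec_eq_of_mem_convergentPowerSeries {𝕜 ι : Type*} [NormedField 𝕜] [Fintype ι]
    [DecidableEq ι] {N : Matrix ι ι 𝕜⟦X⟧} {β : ι → 𝕜⟦X⟧}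
    (hN : ∀ i j, N i j ∈ convergentPowerSeries 𝕜) (hβ : ∀ i, β i ∈ convergentPowerSeries 𝕜)
    (hdet : constantCoeff N.det ≠ 0) :
    ∃ u : ι → 𝕜⟦X⟧, (∀ i, u i ∈ convergentPowerSeries 𝕜) ∧ N *ᵥ u = β := by
  set S := convergentPowerSeries 𝕜
  have hNS : S.subtype.mapMatrix (Matrix.of fun i j => (⟨N i j, hN i j⟩ : S)) = N := rfl
  have hdetS : N.det ∈ S := by
    rw [← hNS, ← RingHom.map_det]; exact SetLike.coe_mem _
  have hadjS : ∀ i j, N.adjugate i j ∈ S := by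
    rw [← hNS, ← RingHom.map_adjugate]; exact fun i j => SetLike.coe_mem _
  refine ⟨N.det⁻¹ • N.adjugate *ᵥ β, fun i => ?_, ?_⟩
  · exact S.mul_mem (inv_mem_convergentPowerSeries hdetS)
      (S.sum_mem fun j _ => S.mul_mem (hadjS i j) (hβ j))
  · rw [mulVec_smul, mulVec_mulVec, mul_adjugate, smul_mulVec, one_mulVec, smul_smul,
      PowerSeries.inv_mul_cancel _ hdet, one_smul]

theorem mk_eq_X_pow_mul_mk_add {R : Type*} [Semiring R] {g : ℕ → R} {k : ℕ}
    (h : ∀ m < k, g m = 0) : mk g = X ^ k * mk fun n => g (n + k) := by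
  ext n
  rw [coeff_mk, coeff_X_pow_mul']
  split_ifs with hk
  · rw [coeff_mk, Nat.sub_add_cancel hk]
  · exact h n (not_le.1 hk)

theorem dotProduct_sum_mulVec_eq_coeff {R ι : Type*} [CommSemiring R] [Fintype ι]
    (M : ℕ → Matrix ι ι R) (a s r : ι → R) (f g : R⟦X⟧) (n : ℕ) :
    a ⬝ᵥ ∑ l ∈ range (n + 1), M l *ᵥ (coeff (n - l) f • s + coeff (n - l) g • r) =
      coeff n (mk (fun l => a ⬝ᵥ M l *ᵥ s) * f + mk (fun l => a ⬝ᵥ M l *ᵥ r) * g) := by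
  rw [map_add, coeff_mul, coeff_mul, Nat.sum_antidiagonal_eq_sum_range_succ_mk,
    Nat.sum_antidiagonal_eq_sum_range_succ_mk, ← sum_add_distrib, dotProduct_sum]
  refine sum_congr rfl fun l _ => ?_
  simp only [coeff_mk, mulVec_add, mulVec_smul, dotProduct_add, dotProduct_smul, smul_eq_mul]
  ring

theorem LinearIndependent.eq_zero_of_dotProduct_eq_zero {K ι : Type*} [Field K] [Fintype ι]
    [DecidableEq ι] {w : ι → ι → K} (hw : LinearIndependent K w) {v : ι → K}
    (h : ∀ i, w i ⬝ᵥ v = 0) : v = 0 :=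
  eq_zero_of_mulVec_eq_zero
    (((linearIndependent_rows_iff_isUnit (A := Matrix.of w)).1 hw).map detMonoidHom).ne_zero
    (funext h)

section TwoByTwo

variable {K : Type*} [Field K] {M : ℕ → Matrix (Fin 2) (Fin 2) K} {b : ℕ → Fin 2 → K}
  {s r : Fin 2 → K}

theorem linearIndependent_pair_of_det_ne_zero (hs : s ≠ 0) (hM0s : M 0 *ᵥ s = 0)
    (hsM1s : s ⬝ᵥ M 1 *ᵥ s = 0)
    (hdet : (!![s ⬝ᵥ M 2 *ᵥ s, s ⬝ᵥ M 1 *ᵥ r; r ⬝ᵥ M 1 *ᵥ s, r ⬝ᵥ M 0 *ᵥ r]).det ≠ 0) :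
    LinearIndependent K ![s, r] := by
  rw [LinearIndependent.pair_iff' hs]
  rintro c rfl
  simp only [det_fin_two_of, mulVec_smul, hM0s, smul_zero, dotProduct_zero, dotProduct_smul,
    smul_dotProduct, hsM1s, smul_eq_mul, mul_zero, sub_zero, ne_eq, not_true_eq_false] at hdet

theorem sum_mulVec_eq_of_dotProduct_eq (hsr : LinearIndependent K ![s, r]) {x y : K⟦X⟧}
    (hs : mk (fun n => s ⬝ᵥ M n *ᵥ s) * x + mk (fun n => s ⬝ᵥ M n *ᵥ r) * y =
      mk fun n => s ⬝ᵥ b n)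
    (hr : mk (fun n => r ⬝ᵥ M n *ᵥ s) * x + mk (fun n => r ⬝ᵥ M n *ᵥ r) * y =
      mk fun n => r ⬝ᵥ b n)
    (n : ℕ) :
    ∑ l ∈ range (n + 1), M l *ᵥ (coeff (n - l) x • s + coeff (n - l) y • r) = b n := by
  rw [← sub_eq_zero]
  refine hsr.eq_zero_of_dotProduct_eq_zero (Fin.forall_fin_two.2 ⟨?_, ?_⟩)
  · rw [cons_val_zero, dotProduct_sub, dotProduct_sum_mulVec_eq_coeff, hs, coeff_mk, sub_self]
  · rw [cons_val_one, cons_val_zero, dotProduct_sub, dotProduct_sum_mulVec_eq_coeff, hr, coeff_mk,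
      sub_self]

end TwoByTwo

theorem exists_convergent_projected_solution {𝕜 : Type*} [NormedField 𝕜]
    {M : ℕ → Matrix (Fin 2) (Fin 2) 𝕜} {b : ℕ → Fin 2 → 𝕜} {s r : Fin 2 → 𝕜}
    (hM : ∀ i j, GeometricallyBounded fun n => M n i j)
    (hb : ∀ i, GeometricallyBounded fun n => b n i)
    (hb0 : b 0 = 0) (hM0s : M 0 *ᵥ s = 0) (hsM0 : ∀ v, s ⬝ᵥ M 0 *ᵥ v = 0)
    (hsb1 : s ⬝ᵥ b 1 = 0) (hsM1s : s ⬝ᵥ M 1 *ᵥ s = 0)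
    (hdet : (!![s ⬝ᵥ M 2 *ᵥ s, s ⬝ᵥ M 1 *ᵥ r; r ⬝ᵥ M 1 *ᵥ s, r ⬝ᵥ M 0 *ᵥ r]).det ≠ 0) :
    ∃ x y : 𝕜⟦X⟧, x ∈ convergentPowerSeries 𝕜 ∧ y ∈ convergentPowerSeries 𝕜 ∧
      constantCoeff y = 0 ∧
      mk (fun n => s ⬝ᵥ M n *ᵥ s) * x + mk (fun n => s ⬝ᵥ M n *ᵥ r) * y =
        mk (fun n => s ⬝ᵥ b n) ∧
      mk (fun n => r ⬝ᵥ M n *ᵥ s) * x + mk (fun n => r ⬝ᵥ M n *ᵥ r) * y =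
        mk (fun n => r ⬝ᵥ b n) := by
  have hMS : ∀ a c k, mk (fun n => a ⬝ᵥ M (n + k) *ᵥ c) ∈ convergentPowerSeries 𝕜 :=
    fun a c k => mk_mem_convergentPowerSeries_iff.2
      ((GeometricallyBounded.dotProduct_mulVec hM a c).comp_add k)
  have hbS : ∀ a k, mk (fun n => a ⬝ᵥ b (n + k)) ∈ convergentPowerSeries 𝕜 :=
    fun a k => mk_mem_convergentPowerSeries_iff.2
      ((GeometricallyBounded.dotProduct hb a).comp_add k)
  -- the projected equations divided by the powers of `X` that the hypotheses in degrees 0, 1 allow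
  obtain ⟨u, hu, hNu⟩ := exists_mulVec_eq_of_mem_convergentPowerSeries
    (N := !![mk fun n => s ⬝ᵥ M (n + 2) *ᵥ s, mk fun n => s ⬝ᵥ M (n + 1) *ᵥ r;
      mk fun n => r ⬝ᵥ M (n + 1) *ᵥ s, mk fun n => r ⬝ᵥ M n *ᵥ r])
    (β := ![mk fun n => s ⬝ᵥ b (n + 2), mk fun n => r ⬝ᵥ b (n + 1)])
    (Fin.forall_fin_two.2 ⟨Fin.forall_fin_two.2 ⟨hMS s s 2, hMS s r 1⟩,
      Fin.forall_fin_two.2 ⟨hMS r s 1, hMS r r 0⟩⟩)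
    (Fin.forall_fin_two.2 ⟨hbS s 2, hbS r 1⟩)
    (by simpa [det_fin_two_of] using hdet)
  have hrow : ∀ i, ∑ j, _ * u j = _ := congrFun hNu
  simp only [Fin.sum_univ_two, Fin.forall_fin_two, of_apply, cons_val', cons_val_zero,
    cons_val_one, empty_val', cons_val_fin_one] at hrow
  obtain ⟨hrow0, hrow1⟩ := hrow
  have hMss : mk (fun n => s ⬝ᵥ M n *ᵥ s) = X ^ 2 * mk fun n => s ⬝ᵥ M (n + 2) *ᵥ s :=
    mk_eq_X_pow_mul_mk_add fun m hm => by interval_cases m; exacts [hsM0 s, hsM1s]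
  have hMsr : mk (fun n => s ⬝ᵥ M n *ᵥ r) = X ^ 1 * mk fun n => s ⬝ᵥ M (n + 1) *ᵥ r :=
    mk_eq_X_pow_mul_mk_add fun m hm => by interval_cases m; exact hsM0 r
  have hMrs : mk (fun n => r ⬝ᵥ M n *ᵥ s) = X ^ 1 * mk fun n => r ⬝ᵥ M (n + 1) *ᵥ s :=
    mk_eq_X_pow_mul_mk_add fun m hm => by interval_cases m; simp [hM0s]
  have hbs : mk (fun n => s ⬝ᵥ b n) = X ^ 2 * mk fun n => s ⬝ᵥ b (n + 2) :=
    mk_eq_X_pow_mul_mk_add fun m hm => by interval_cases m; exacts [by simp [hb0], hsb1]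
  have hbr : mk (fun n => r ⬝ᵥ b n) = X ^ 1 * mk fun n => r ⬝ᵥ b (n + 1) :=
    mk_eq_X_pow_mul_mk_add fun m hm => by interval_cases m; simp [hb0]
  refine ⟨u 0, X * u 1, hu 0, Subring.mul_mem _ X_mem_convergentPowerSeries (hu 1), by simp,
    ?_, ?_⟩
  · rw [hMss, hMsr, hbs]
    linear_combination X ^ 2 * hrow0
  · rw [hMrs, hbr]
    linear_combination X * hrow1

theorem stmt_14_general (M : ℕ → Matrix (Fin 2) (Fin 2) ℂ) (b : ℕ → Fin 2 → ℂ)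
    (s r : Fin 2 → ℂ) (hs : s ≠ 0)
    (hMconv : ∃ C ρ : ℝ, 0 < ρ ∧ ∀ n i j, ‖M n i j‖ ≤ C / ρ ^ n)
    (hbconv : ∃ C ρ : ℝ, 0 < ρ ∧ ∀ n i, ‖b n i‖ ≤ C / ρ ^ n)
    (hb0 : b 0 = 0)
    (hnull : ∀ v, (M 0).mulVec v = 0 ↔ ∃ c : ℂ, v = c • s)
    (hran : ∀ v, (∃ u, (M 0).mulVec u = v) ↔ ∃ c : ℂ, v = c • r)
    (hsr : s ⬝ᵥ r = 0)
    (hsb1 : s ⬝ᵥ b 1 = 0)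
    (hsM1s : s ⬝ᵥ (M 1).mulVec s = 0)
    (hM0inv : (!![s ⬝ᵥ (M 2).mulVec s, s ⬝ᵥ (M 1).mulVec r;
                 r ⬝ᵥ (M 1).mulVec s, r ⬝ᵥ (M 0).mulVec r]).det ≠ 0) :
    ∃ t : ℕ → Fin 2 → ℂ,
      (∃ C ρ : ℝ, 0 < ρ ∧ ∀ n i, ‖t n i‖ ≤ C / ρ ^ n) ∧
      (∀ n, ∑ l ∈ Finset.range (n + 1), (M l).mulVec (t (n - l)) = b n) ∧
      (∃ c : ℂ, t 0 = c • s) := by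
  have hM0s : M 0 *ᵥ s = 0 := (hnull s).2 ⟨1, (one_smul ℂ s).symm⟩
  have hsM0 : ∀ v, s ⬝ᵥ M 0 *ᵥ v = 0 := fun v => by
    obtain ⟨c, hc⟩ := (hran _).1 ⟨v, rfl⟩
    rw [hc, dotProduct_smul, hsr, smul_zero]
  obtain ⟨CM, ρM, hρM, hMC⟩ := hMconv
  obtain ⟨Cb, ρb, hρb, hbC⟩ := hbconv
  obtain ⟨x, y, hx, hy, hy0, hs_eq, hr_eq⟩ := exists_convergent_projected_solution
    (fun i j => geometricallyBounded_iff.2 ⟨CM, ρM, hρM, fun n => hMC n i j⟩)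
    (fun i => geometricallyBounded_iff.2 ⟨Cb, ρb, hρb, fun n => hbC n i⟩)
    hb0 hM0s hsM0 hsb1 hsM1s hM0inv
  refine ⟨fun n => coeff n x • s + coeff n y • r, ?_,
    sum_mulVec_eq_of_dotProduct_eq (linearIndependent_pair_of_det_ne_zero hs hM0s hsM1s hM0inv)
      hs_eq hr_eq, coeff 0 x, by simp [hy0]⟩
  obtain ⟨C, ρ, hρ, h⟩ := geometricallyBounded_iff.1 ((hx.smul_const s).add (hy.smul_const r))
  exact ⟨C, ρ, hρ, fun n i => (norm_le_pi_norm _ i).trans (h n)⟩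

/-- Lemma 3.7 of the paper: existence of a convergent power-series solution
`t(z)` of `M(z) t(z) = b(z)` with `t₀ ∈ span{s}`.  Power series are encoded by
their coefficient sequences; positive radius of convergence is encoded by a
geometric bound on the coefficients, and the equation `M(z)t(z) = b(z)` by the
Cauchy-product recurrence on coefficients. -/
theorem stmt_14 (M : ℕ → Matrix (Fin 2) (Fin 2) ℂ) (b : ℕ → Fin 2 → ℂ)
    (s r : Fin 2 → ℂ) (hs : s ≠ 0) (hr : r ≠ 0)
    (hMconv : ∃ C ρ : ℝ, 0 < ρ ∧ ∀ n i j, ‖M n i j‖ ≤ C / ρ ^ n)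
    (hbconv : ∃ C ρ : ℝ, 0 < ρ ∧ ∀ n i, ‖b n i‖ ≤ C / ρ ^ n)
    (hb0 : b 0 = 0)
    (hM0ne : M 0 ≠ 0)
    (hnull : ∀ v, (M 0).mulVec v = 0 ↔ ∃ c : ℂ, v = c • s)
    (hran : ∀ v, (∃ u, (M 0).mulVec u = v) ↔ ∃ c : ℂ, v = c • r)
    (hsr : s ⬝ᵥ r = 0)
    (hsb1 : s ⬝ᵥ b 1 = 0)
    (hsM1s : s ⬝ᵥ (M 1).mulVec s = 0)
    (hM0inv : (!![s ⬝ᵥ (M 2).mulVec s, s ⬝ᵥ (M 1).mulVec r;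
                 r ⬝ᵥ (M 1).mulVec s, r ⬝ᵥ (M 0).mulVec r]).det ≠ 0) :
    ∃ t : ℕ → Fin 2 → ℂ,
      (∃ C ρ : ℝ, 0 < ρ ∧ ∀ n i, ‖t n i‖ ≤ C / ρ ^ n) ∧
      (∀ n, ∑ l ∈ Finset.range (n + 1), (M l).mulVec (t (n - l)) = b n) ∧
      (∃ c : ℂ, t 0 = c • s) :=
  stmt_14_general M b s r hs hMconv hbconv hb0 hnull hran hsr hsb1 hsM1s hM0inv
end

section
/- Under the hypotheses of the previous statement (M₀ singular with null space span{s}, range span{r}, sᵀr = 0, sᵀM₁s = 0, 𝓜₀ invertible), if additionally sᵀM₂s = 0 and b(z) = z·r, then the power series solution t(z) of M(z)t(z) = b(z) has leading coefficient t₀ = (rᵀr / rᵀM₁s) · s; note rᵀM₁s ≠ 0 since 𝓜₀ is invertible and its (1,1) entry sᵀM₂s vanishes. -/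
/-!
Write `t(z) = a(z) s + c(z) r`. Since `s ⬝ᵥ r = 0` and `s, r` are independent, they form an
orthogonal basis of non-isotropic vectors, so `M(z) t(z) = z r` becomes a 2 × 2 system over power
series in the `s`- and `r`-coordinates of `M(z) s` and `M(z) r`. The hypotheses make these
divisible by `z³`, `z` and `z` (for `M(z) s` along `s`, `M(z) s` along `r`, `M(z) r` along `s`),
the last two with nonzero `z`-coefficients `rᵀM₁s / rᵀr` and `sᵀM₁r / sᵀs`. Eliminating `c`
leaves `a` as the inverse of a power series with constant term `rᵀM₁s / rᵀr`. Convergence is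
preserved because power series with geometrically bounded coefficients form a subring that is
closed under inversion.
-/

open Matrix Finset

section OrthogonalPair

variable {K : Type*} [Field K] {s r : Fin 2 → K}

theorem linearIndependent_pair_of_dotProduct {w : Fin 2 → K} (hs : s ≠ 0) (hsw : s ⬝ᵥ w = 0)
    (hrw : r ⬝ᵥ w ≠ 0) : LinearIndependent K ![s, r] :=
  (LinearIndependent.pair_iff' hs).mpr fun a h => hrw (by rw [← h, smul_dotProduct, hsw, smul_zero])

theorem exists_smul_add_smul_eq (hind : LinearIndependent K ![s, r]) (v : Fin 2 → K) :
    ∃ α β : K, α • s + β • r = v := by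
  let b := basisOfLinearIndependentOfCardEqFinrank hind (by simp)
  exact ⟨b.repr v 0, b.repr v 1, by simpa [b, Fin.sum_univ_two] using b.sum_repr v⟩

theorem dotProduct_self_ne_zero_of_linearIndependent (hind : LinearIndependent K ![s, r])
    (hsr : s ⬝ᵥ r = 0) : s ⬝ᵥ s ≠ 0 := by
  intro hss
  refine hind.ne_zero 0 (funext fun i => ?_)
  obtain ⟨α, β, h⟩ := exists_smul_add_smul_eq hind (Pi.single i 1)
  simpa [dotProduct_add, hss, hsr] using (congr_arg (s ⬝ᵥ ·) h).symm

theorem eq_dotProduct_div_smul_add (hind : LinearIndependent K ![s, r]) (hsr : s ⬝ᵥ r = 0)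
    (v : Fin 2 → K) : v = (s ⬝ᵥ v / s ⬝ᵥ s) • s + (r ⬝ᵥ v / r ⬝ᵥ r) • r := by
  have hrs : r ⬝ᵥ s = 0 := by rwa [dotProduct_comm]
  have hss := dotProduct_self_ne_zero_of_linearIndependent hind hsr
  have hrr : r ⬝ᵥ r ≠ 0 :=
    dotProduct_self_ne_zero_of_linearIndependent (LinearIndependent.pair_symm_iff.mp hind) hrs
  obtain ⟨α, β, rfl⟩ := exists_smul_add_smul_eq hind v
  simp only [dotProduct_add, dotProduct_smul, smul_eq_mul, hsr, hrs, mul_zero, add_zero, zero_add,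
    mul_div_cancel_right₀ _ hss, mul_div_cancel_right₀ _ hrr]

end OrthogonalPair

namespace PowerSeries

theorem coeff_mul_eq_sum_range {R : Type*} [Semiring R] (n : ℕ) (f g : R⟦X⟧) :
    coeff n (f * g) = ∑ l ∈ range (n + 1), coeff l f * coeff (n - l) g := by
  rw [coeff_mul, Nat.sum_antidiagonal_eq_sum_range_succ (fun i j => coeff i f * coeff j g)]

theorem constantCoeff_mul_coeff_succ_inv {K : Type*} [Field K] {f : K⟦X⟧}
    (hf : constantCoeff f ≠ 0) (n : ℕ) :
    constantCoeff f * coeff (n + 1) f⁻¹ =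
      -∑ l ∈ range (n + 1), coeff (l + 1) f * coeff (n - l) f⁻¹ := by
  have h := congr_arg (coeff (n + 1)) (PowerSeries.mul_inv_cancel f hf)
  rw [coeff_mul_eq_sum_range, sum_range_succ', coeff_one, if_neg n.succ_ne_zero] at h
  simp only [Nat.add_sub_add_right, Nat.sub_zero, coeff_zero_eq_constantCoeff_apply] at h
  exact eq_neg_of_add_eq_zero_right h

section Convergent

variable {R : Type*} [NormedRing R]

theorem nonneg_of_norm_coeff_le {f : R⟦X⟧} {C K : ℝ} (h : ∀ n, ‖coeff n f‖ ≤ C * K ^ n) :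
    0 ≤ C := by
  simpa using (norm_nonneg _).trans (h 0)

variable (R) in
def convergent : Subring R⟦X⟧ where
  carrier := {f | ∃ C K : ℝ, 0 < K ∧ ∀ n, ‖coeff n f‖ ≤ C * K ^ n}
  zero_mem' := ⟨0, 1, one_pos, fun n => by simp⟩
  one_mem' := ⟨‖(1 : R)‖, 1, one_pos, fun n => by rw [coeff_one]; split_ifs <;> simp⟩
  add_mem' := by
    rintro f g ⟨C₁, K₁, hK₁, hf⟩ ⟨C₂, K₂, hK₂, hg⟩
    have hC₁ := nonneg_of_norm_coeff_le hf
    have hC₂ := nonneg_of_norm_coeff_le hg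
    refine ⟨C₁ + C₂, K₁ + K₂, by positivity, fun n => ?_⟩
    calc ‖coeff n (f + g)‖ ≤ C₁ * K₁ ^ n + C₂ * K₂ ^ n :=
          (norm_add_le _ _).trans (add_le_add (hf n) (hg n))
      _ ≤ C₁ * (K₁ + K₂) ^ n + C₂ * (K₁ + K₂) ^ n := by gcongr <;> linarith
      _ = (C₁ + C₂) * (K₁ + K₂) ^ n := by ring
  neg_mem' := by
    rintro f ⟨C, K, hK, hf⟩
    exact ⟨C, K, hK, fun n => by simpa using hf n⟩
  mul_mem' := by
    rintro f g ⟨C₁, K₁, hK₁, hf⟩ ⟨C₂, K₂, hK₂, hg⟩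
    have hC₁ := nonneg_of_norm_coeff_le hf
    have hC₂ := nonneg_of_norm_coeff_le hg
    refine ⟨C₁ * C₂, K₁ + K₂, by positivity, fun n => ?_⟩
    calc ‖coeff n (f * g)‖ ≤ ∑ l ∈ range (n + 1), C₁ * K₁ ^ l * (C₂ * K₂ ^ (n - l)) := by
          rw [coeff_mul_eq_sum_range]
          refine (norm_sum_le _ _).trans (sum_le_sum fun l _ => (norm_mul_le _ _).trans ?_)
          gcongr
          exacts [hf l, hg _]
      _ ≤ ∑ l ∈ range (n + 1), C₁ * C₂ * (K₁ ^ l * K₂ ^ (n - l) * n.choose l) := by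
          refine sum_le_sum fun l hl => ?_
          have : (1 : ℝ) ≤ n.choose l :=
            Nat.one_le_cast.mpr (Nat.choose_pos (Nat.lt_succ_iff.mp (mem_range.mp hl)))
          rw [show C₁ * K₁ ^ l * (C₂ * K₂ ^ (n - l)) = C₁ * C₂ * (K₁ ^ l * K₂ ^ (n - l) * 1) by
            ring]
          gcongr
      _ = C₁ * C₂ * (K₁ + K₂) ^ n := by rw [add_pow, mul_sum]

theorem C_mem_convergent (a : R) : C a ∈ convergent R :=
  ⟨‖a‖, 1, one_pos, fun n => by rw [coeff_C]; split_ifs <;> simp⟩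

theorem X_mem_convergent : (X : R⟦X⟧) ∈ convergent R :=
  ⟨‖(1 : R)‖, 1, one_pos, fun n => by rw [coeff_X]; split_ifs <;> simp⟩

theorem mem_convergent_of_X_pow_mul_mem {f : R⟦X⟧} {k : ℕ} (hf : X ^ k * f ∈ convergent R) :
    f ∈ convergent R := by
  obtain ⟨C, K, hK, hf⟩ := hf
  exact ⟨C * K ^ k, K, hK, fun n => by simpa [pow_add, mul_assoc, mul_comm] using hf (n + k)⟩

theorem exists_mem_convergent_eq_X_pow_mul {f : R⟦X⟧} {k : ℕ} (hf : f ∈ convergent R)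
    (hk : X ^ k ∣ f) : ∃ g ∈ convergent R, f = X ^ k * g := by
  obtain ⟨g, rfl⟩ := hk
  exact ⟨g, mem_convergent_of_X_pow_mul_mem hf, rfl⟩

variable {𝕜 : Type*} [NormedField 𝕜]

theorem inv_mem_convergent {f : 𝕜⟦X⟧} (hf : f ∈ convergent 𝕜) : f⁻¹ ∈ convergent 𝕜 := by
  by_cases h0 : constantCoeff f = 0
  · rw [inv_eq_zero.mpr h0]
    exact zero_mem _
  obtain ⟨C, K, hK, hf⟩ := hf
  have hC := nonneg_of_norm_coeff_le hf
  have hf0 : 0 < ‖constantCoeff f‖ := norm_pos_iff.mpr h0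
  set B := ‖constantCoeff f‖⁻¹
  -- chosen so that the majorant sum `C B K ∑ Kˡ L^(n-l)` telescopes to `L^(n+1) - K^(n+1)`
  set L := K * (1 + C * B)
  refine ⟨B, L, by positivity, fun n => ?_⟩
  induction n using Nat.strong_induction_on with | _ n ih => ?_
  rcases n with _ | n
  · simp [B]
  have hgeom : C * B * K * ∑ l ∈ range (n + 1), K ^ l * L ^ (n - l) =
      L ^ (n + 1) - K ^ (n + 1) := by
    have := geom_sum₂_mul K L (n + 1)
    simp only [Nat.add_sub_cancel] at this
    linear_combination -this
  rw [le_inv_mul_iff₀ hf0, ← norm_mul, constantCoeff_mul_coeff_succ_inv h0, norm_neg]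
  calc ‖∑ l ∈ range (n + 1), coeff (l + 1) f * coeff (n - l) f⁻¹‖
      ≤ ∑ l ∈ range (n + 1), C * K ^ (l + 1) * (B * L ^ (n - l)) := by
        refine (norm_sum_le _ _).trans (sum_le_sum fun l hl => (norm_mul_le _ _).trans ?_)
        gcongr
        · exact hf _
        · exact ih _ (by omega)
    _ = L ^ (n + 1) - K ^ (n + 1) := by
        rw [← hgeom, mul_sum]
        exact sum_congr rfl fun l _ => by ring
    _ ≤ L ^ (n + 1) := by
        have := pow_pos hK (n + 1)
        linarith

theorem exists_convergent_solution {p q u w : 𝕜⟦X⟧} (hp : p ∈ convergent 𝕜)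
    (hq : q ∈ convergent 𝕜) (hu : u ∈ convergent 𝕜) (hw : w ∈ convergent 𝕜)
    (hq0 : constantCoeff q ≠ 0) (hu0 : constantCoeff u ≠ 0) :
    ∃ a ∈ convergent 𝕜, ∃ c ∈ convergent 𝕜,
      X ^ 3 * p * a + X * u * c = 0 ∧ X * q * a + w * c = X ∧
      constantCoeff a = (constantCoeff q)⁻¹ ∧ constantCoeff c = 0 := by
  set d := q - X * w * p * u⁻¹
  have hd0 : constantCoeff d = constantCoeff q := by simp [d]
  have hd : d * d⁻¹ = 1 := PowerSeries.mul_inv_cancel d (hd0 ▸ hq0)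
  have hu' : u * u⁻¹ = 1 := PowerSeries.mul_inv_cancel u hu0
  have hX : (X : 𝕜⟦X⟧) ∈ convergent 𝕜 := X_mem_convergent
  have hd_mem : d ∈ convergent 𝕜 :=
    sub_mem hq (mul_mem (mul_mem (mul_mem hX hw) hp) (inv_mem_convergent hu))
  refine ⟨d⁻¹, inv_mem_convergent hd_mem, -(X ^ 2 * p * u⁻¹ * d⁻¹),
    neg_mem (mul_mem (mul_mem (mul_mem (pow_mem hX 2) hp) (inv_mem_convergent hu))
      (inv_mem_convergent hd_mem)), ?_, ?_, ?_, ?_⟩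
  · linear_combination (-(X ^ 3 * p * d⁻¹)) * hu'
  · linear_combination X * hd
  · rw [constantCoeff_inv, hd0]
  · simp

end Convergent

section Coordinates

variable {ι : Type*} [Fintype ι]

/-- The `u`-coordinate of `M(z) v` with respect to an orthogonal basis containing `u`. -/
def coordSeries {K : Type*} [Field K] (M : ℕ → Matrix ι ι K) (u v : ι → K) : K⟦X⟧ :=
  mk fun l => u ⬝ᵥ M l *ᵥ v / u ⬝ᵥ u

theorem sum_mulVec_smul_add_smul {K : Type*} [Field K] {M : ℕ → Matrix ι ι K} {s r : ι → K}
    (hdecomp : ∀ v, v = (s ⬝ᵥ v / s ⬝ᵥ s) • s + (r ⬝ᵥ v / r ⬝ᵥ r) • r) (a c : K⟦X⟧) (n : ℕ) :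
    ∑ l ∈ range (n + 1), M l *ᵥ (coeff (n - l) a • s + coeff (n - l) c • r) =
      coeff n (coordSeries M s s * a + coordSeries M s r * c) • s +
        coeff n (coordSeries M r s * a + coordSeries M r r * c) • r := by
  have hterm : ∀ l x y, M l *ᵥ (x • s + y • r) =
      (coeff l (coordSeries M s s) * x + coeff l (coordSeries M s r) * y) • s +
        (coeff l (coordSeries M r s) * x + coeff l (coordSeries M r r) * y) • r := by
    intro l x y
    rw [mulVec_add, mulVec_smul, mulVec_smul, hdecomp (M l *ᵥ s), hdecomp (M l *ᵥ r)]
    simp only [coordSeries, coeff_mk]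
    module
  simp only [hterm, sum_add_distrib, ← sum_smul, map_add, coeff_mul_eq_sum_range]

variable {𝕜 : Type*} [NormedField 𝕜]

theorem coordSeries_mem_convergent {M : ℕ → Matrix ι ι 𝕜}
    (hM : ∃ C ρ : ℝ, 0 < ρ ∧ ∀ n i j, ‖M n i j‖ ≤ C / ρ ^ n) (u v : ι → 𝕜) :
    coordSeries M u v ∈ convergent 𝕜 := by
  obtain ⟨C, ρ, hρ, hM⟩ := hM
  have hentry : ∀ i j, mk (fun n => M n i j) ∈ convergent 𝕜 := fun i j =>
    ⟨C, ρ⁻¹, inv_pos.mpr hρ, fun n => by simpa [div_eq_mul_inv] using hM n i j⟩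
  have : coordSeries M u v =
      ∑ i, ∑ j, PowerSeries.C (u i * v j / u ⬝ᵥ u) * mk (fun n => M n i j) := by
    ext n
    simp only [coordSeries, coeff_mk, map_sum, coeff_C_mul, dotProduct, mulVec, mul_sum, sum_div]
    exact sum_congr rfl fun i _ => sum_congr rfl fun j _ => by ring
  rw [this]
  exact sum_mem fun i _ => sum_mem fun j _ => mul_mem (C_mem_convergent _) (hentry i j)

theorem exists_bound_coeff_smul_add_smul {a c : 𝕜⟦X⟧} (ha : a ∈ convergent 𝕜)
    (hc : c ∈ convergent 𝕜) (s r : ι → 𝕜) :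
    ∃ C ρ : ℝ, 0 < ρ ∧ ∀ n i, ‖(coeff n a • s + coeff n c • r) i‖ ≤ C / ρ ^ n := by
  obtain ⟨Ca, Ka, hKa, ha⟩ := ha
  obtain ⟨Cc, Kc, hKc, hc⟩ := hc
  have hCa := nonneg_of_norm_coeff_le ha
  have hCc := nonneg_of_norm_coeff_le hc
  refine ⟨Ca * ‖s‖ + Cc * ‖r‖, (Ka + Kc)⁻¹, by positivity, fun n i => ?_⟩
  rw [inv_pow, div_inv_eq_mul]
  calc ‖(coeff n a • s + coeff n c • r) i‖ ≤ ‖coeff n a‖ * ‖s‖ + ‖coeff n c‖ * ‖r‖ := by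
        simp only [Pi.add_apply, Pi.smul_apply, smul_eq_mul]
        refine (norm_add_le _ _).trans (add_le_add ?_ ?_) <;> rw [norm_mul] <;>
          gcongr <;> exact norm_le_pi_norm _ i
    _ ≤ Ca * (Ka + Kc) ^ n * ‖s‖ + Cc * (Ka + Kc) ^ n * ‖r‖ := by
        gcongr
        · exact (ha n).trans (by gcongr; linarith)
        · exact (hc n).trans (by gcongr; linarith)
    _ = (Ca * ‖s‖ + Cc * ‖r‖) * (Ka + Kc) ^ n := by ring

theorem exists_solution_of_coordSeries {M : ℕ → Matrix ι ι 𝕜} {s r : ι → 𝕜}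
    (hM : ∃ C ρ : ℝ, 0 < ρ ∧ ∀ n i j, ‖M n i j‖ ≤ C / ρ ^ n)
    (hdecomp : ∀ v, v = (s ⬝ᵥ v / s ⬝ᵥ s) • s + (r ⬝ᵥ v / r ⬝ᵥ r) • r)
    (hP : X ^ 3 ∣ coordSeries M s s) (hQ : X ∣ coordSeries M r s) (hR : X ∣ coordSeries M s r)
    (hQ1 : coeff 1 (coordSeries M r s) ≠ 0) (hR1 : coeff 1 (coordSeries M s r) ≠ 0) :
    ∃ t : ℕ → ι → 𝕜, (∃ C ρ : ℝ, 0 < ρ ∧ ∀ n i, ‖t n i‖ ≤ C / ρ ^ n) ∧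
      (∀ n, ∑ l ∈ range (n + 1), M l *ᵥ t (n - l) = coeff n (X : 𝕜⟦X⟧) • r) ∧
      t 0 = (coeff 1 (coordSeries M r s))⁻¹ • s := by
  obtain ⟨p, hp, hPp⟩ := exists_mem_convergent_eq_X_pow_mul (coordSeries_mem_convergent hM s s) hP
  obtain ⟨q, hq, hQq⟩ := exists_mem_convergent_eq_X_pow_mul (k := 1)
    (coordSeries_mem_convergent hM r s) (by rwa [pow_one])
  obtain ⟨u, hu, hRu⟩ := exists_mem_convergent_eq_X_pow_mul (k := 1)
    (coordSeries_mem_convergent hM s r) (by rwa [pow_one])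
  rw [pow_one] at hQq hRu
  rw [hQq, coeff_succ_X_mul, coeff_zero_eq_constantCoeff_apply] at hQ1
  rw [hRu, coeff_succ_X_mul, coeff_zero_eq_constantCoeff_apply] at hR1
  obtain ⟨a, ha, c, hc, hfirst, hsecond, ha0, hc0⟩ :=
    exists_convergent_solution hp hq hu (coordSeries_mem_convergent hM r r) hQ1 hR1
  refine ⟨fun n => coeff n a • s + coeff n c • r, exists_bound_coeff_smul_add_smul ha hc s r,
    fun n => ?_, ?_⟩
  · rw [sum_mulVec_smul_add_smul hdecomp, hPp, hQq, hRu, hfirst, hsecond, map_zero, zero_smul,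
      zero_add]
  · simp [hQq, ha0, hc0]

theorem exists_solution_of_dotProduct {M : ℕ → Matrix (Fin 2) (Fin 2) 𝕜} {s r : Fin 2 → 𝕜}
    (hM : ∃ C ρ : ℝ, 0 < ρ ∧ ∀ n i j, ‖M n i j‖ ≤ C / ρ ^ n)
    (hind : LinearIndependent 𝕜 ![s, r]) (hsr : s ⬝ᵥ r = 0) (hM0s : M 0 *ᵥ s = 0)
    (hsM0r : s ⬝ᵥ M 0 *ᵥ r = 0) (hsM1s : s ⬝ᵥ M 1 *ᵥ s = 0) (hsM2s : s ⬝ᵥ M 2 *ᵥ s = 0)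
    (hrM1s : r ⬝ᵥ M 1 *ᵥ s ≠ 0) (hsM1r : s ⬝ᵥ M 1 *ᵥ r ≠ 0) :
    ∃ t : ℕ → Fin 2 → 𝕜, (∃ C ρ : ℝ, 0 < ρ ∧ ∀ n i, ‖t n i‖ ≤ C / ρ ^ n) ∧
      (∀ n, ∑ l ∈ range (n + 1), M l *ᵥ t (n - l) = if n = 1 then r else 0) ∧
      t 0 = (r ⬝ᵥ r / r ⬝ᵥ M 1 *ᵥ s) • s := by
  have hrr : r ⬝ᵥ r ≠ 0 := dotProduct_self_ne_zero_of_linearIndependent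
    (LinearIndependent.pair_symm_iff.mp hind) (by rwa [dotProduct_comm])
  have hss := dotProduct_self_ne_zero_of_linearIndependent hind hsr
  obtain ⟨t, ht, hsolve, ht0⟩ := exists_solution_of_coordSeries hM
    (eq_dotProduct_div_smul_add hind hsr)
    (X_pow_dvd_iff.mpr fun m hm => by
      interval_cases m <;>
        simp only [coordSeries, coeff_mk, hM0s, dotProduct_zero, hsM1s, hsM2s, zero_div])
    (X_dvd_iff.mpr (by simp only [coordSeries, constantCoeff_mk, hM0s, dotProduct_zero, zero_div]))
    (X_dvd_iff.mpr (by simp only [coordSeries, constantCoeff_mk, hsM0r, zero_div]))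
    (by simpa only [coordSeries, coeff_mk] using div_ne_zero hrM1s hrr)
    (by simpa only [coordSeries, coeff_mk] using div_ne_zero hsM1r hss)
  refine ⟨t, ht, fun n => ?_, by simp only [ht0, coordSeries, coeff_mk, inv_div]⟩
  rw [hsolve, coeff_X, ite_smul, one_smul, zero_smul]

end Coordinates

end PowerSeries

theorem stmt_15_general (M : ℕ → Matrix (Fin 2) (Fin 2) ℂ)
    (s r : Fin 2 → ℂ) (hs : s ≠ 0)
    (hMconv : ∃ C ρ : ℝ, 0 < ρ ∧ ∀ n i j, ‖M n i j‖ ≤ C / ρ ^ n)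
    (hnull : ∀ v, (M 0).mulVec v = 0 ↔ ∃ c : ℂ, v = c • s)
    (hran : ∀ v, (∃ u, (M 0).mulVec u = v) ↔ ∃ c : ℂ, v = c • r)
    (hsr : s ⬝ᵥ r = 0)
    (hsM1s : s ⬝ᵥ (M 1).mulVec s = 0)
    (hM0inv : (!![s ⬝ᵥ (M 2).mulVec s, s ⬝ᵥ (M 1).mulVec r;
                 r ⬝ᵥ (M 1).mulVec s, r ⬝ᵥ (M 0).mulVec r]).det ≠ 0)
    (hsM2s : s ⬝ᵥ (M 2).mulVec s = 0)
    (b : ℕ → Fin 2 → ℂ) (hb : b = fun n => if n = 1 then r else 0) :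
    r ⬝ᵥ (M 1).mulVec s ≠ 0 ∧
    ∃ t : ℕ → Fin 2 → ℂ,
      (∃ C ρ : ℝ, 0 < ρ ∧ ∀ n i, ‖t n i‖ ≤ C / ρ ^ n) ∧
      (∀ n, ∑ l ∈ Finset.range (n + 1), (M l).mulVec (t (n - l)) = b n) ∧
      t 0 = ((r ⬝ᵥ r) / (r ⬝ᵥ (M 1).mulVec s)) • s := by
  rw [det_fin_two_of, hsM2s, zero_mul, zero_sub, neg_ne_zero] at hM0inv
  obtain ⟨hsM1r, hrM1s⟩ := mul_ne_zero_iff.mp hM0inv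
  obtain ⟨k, hk⟩ := (hran (M 0 *ᵥ r)).mp ⟨r, rfl⟩
  obtain ⟨t, ht, hsolve, ht0⟩ := PowerSeries.exists_solution_of_dotProduct hMconv
    (linearIndependent_pair_of_dotProduct hs hsM1s hrM1s) hsr
    ((hnull s).mpr ⟨1, (one_smul ℂ s).symm⟩) (by rw [hk, dotProduct_smul, hsr, smul_zero])
    hsM1s hsM2s hrM1s hsM1r
  exact ⟨hrM1s, t, ht, hb ▸ hsolve, ht0⟩

/-- Case (i) of Lemma 3.7: with additionally `sᵀM₂s = 0` and `b(z) = z·r`, the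
power-series solution of `M(z)t(z) = b(z)` has leading coefficient
`t₀ = (rᵀr / rᵀM₁s) • s`, and `rᵀM₁s ≠ 0`. -/
theorem stmt_15 (M : ℕ → Matrix (Fin 2) (Fin 2) ℂ)
    (s r : Fin 2 → ℂ) (hs : s ≠ 0) (hr : r ≠ 0)
    (hMconv : ∃ C ρ : ℝ, 0 < ρ ∧ ∀ n i j, ‖M n i j‖ ≤ C / ρ ^ n)
    (hM0ne : M 0 ≠ 0)
    (hnull : ∀ v, (M 0).mulVec v = 0 ↔ ∃ c : ℂ, v = c • s)
    (hran : ∀ v, (∃ u, (M 0).mulVec u = v) ↔ ∃ c : ℂ, v = c • r)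
    (hsr : s ⬝ᵥ r = 0)
    (hsM1s : s ⬝ᵥ (M 1).mulVec s = 0)
    (hM0inv : (!![s ⬝ᵥ (M 2).mulVec s, s ⬝ᵥ (M 1).mulVec r;
                 r ⬝ᵥ (M 1).mulVec s, r ⬝ᵥ (M 0).mulVec r]).det ≠ 0)
    (hsM2s : s ⬝ᵥ (M 2).mulVec s = 0)
    (b : ℕ → Fin 2 → ℂ) (hb : b = fun n => if n = 1 then r else 0) :
    r ⬝ᵥ (M 1).mulVec s ≠ 0 ∧
    ∃ t : ℕ → Fin 2 → ℂ,
      (∃ C ρ : ℝ, 0 < ρ ∧ ∀ n i, ‖t n i‖ ≤ C / ρ ^ n) ∧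
      (∀ n, ∑ l ∈ Finset.range (n + 1), (M l).mulVec (t (n - l)) = b n) ∧
      t 0 = ((r ⬝ᵥ r) / (r ⬝ᵥ (M 1).mulVec s)) • s :=
  stmt_15_general M s r hs hMconv hnull hran hsr hsM1s hM0inv hsM2s b hb
end
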